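/- arXiv:2312.10498 — 8 statements merged into one kernel-verified Lean document; each statement's English description precedes it below -/
import Mathlib

section
/- Let n = 2 and m ≥ 2. There is a surjective group homomorphism π: Z_2(D_{Z_m}) → Z/m with π(h_1) = 0 and π(u) = 1̄; π admits a group-homomorphism section defined by 1̄ ↦ u; and ker π is isomorphic to the Artin group A(I_2(m)) of dihedral type I_2(m) via an isomorphism sending a ↦ u h_1 u^{-1} and h ↦ h_1. (In particular Z_2(D_{Z_m}) is a semidirect product A(I_2(m)) ⋊ Z/m.) -/
namespace Stmt4

/-- `alt x y k` is the alternating product `x y x y ⋯` with `k` factors, starting with `x`. -/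
def alt {G : Type*} [Monoid G] (x y : G) : ℕ → G
  | 0 => 1
  | k + 1 => x * alt y x k

/-- Generators of `Z_2(D_{Z_m})`: `false` is `h_1`, `true` is `u`. -/
abbrev ZGen := Bool

def zh : FreeGroup ZGen := FreeGroup.of false

def zu : FreeGroup ZGen := FreeGroup.of true

/-- Defining relations of `Z_2(D_{Z_m})`. -/
def zrels (m : ℕ) : Set (FreeGroup ZGen) :=
  {r | r = zu ^ m ∨ r = (zh * zu * zh) * zu * (zu * (zh * zu * zh))⁻¹}

/-- The orbifold braid group `Z_2(D_{Z_m})`. -/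
abbrev Z (m : ℕ) := PresentedGroup (zrels m)

/-- Generators of the Artin group `A(I_2(m))`: `false` is `h`, `true` is `a`. -/
abbrev AGen := Bool

def ah : FreeGroup AGen := FreeGroup.of false

def aa : FreeGroup AGen := FreeGroup.of true

/-- Defining relation `⟨h,a⟩_m = ⟨a,h⟩_m` of the Artin group of dihedral type `I_2(m)`. -/
def arels (m : ℕ) : Set (FreeGroup AGen) :=
  {r | r = alt ah aa m * (alt aa ah m)⁻¹}

/-- The Artin group `A(I_2(m))`. -/
abbrev A (m : ℕ) := PresentedGroup (arels m)

/-!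
Conjugation by `u` maps `h₁` to `a := u h₁ u⁻¹` and, by the braid relation, `a` to `a⁻¹ h₁ a`.
On `A(I_2(m))` the corresponding assignment `h ↦ a`, `a ↦ a⁻¹ h a` is an automorphism (conjugation
by `a⁻¹` after swapping the generators) whose `m`-th power is trivial: its square is conjugation by
`(h a)⁻¹`, and the Garside element `⟨h,a⟩_m` is central for even `m` and exchanges `h` and `a` by
conjugation for odd `m`. So `Z/m` acts on `A(I_2(m))`, and `h₁ ↦ h`, `u ↦ 1̄` and
`h ↦ h₁`, `a ↦ u h₁ u⁻¹`, `1̄ ↦ u` are mutually inverse isomorphisms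
`Z_2(D_{Z_m}) ≃ A(I_2(m)) ⋊ Z/m`; `π` is the projection to `Z/m`, with kernel `A(I_2(m))`.
-/

section Alternating

variable {G : Type*} [Monoid G]

theorem map_alt {H : Type*} [Monoid H] (f : G →* H) (x y : G) (k : ℕ) :
    f (alt x y k) = alt (f x) (f y) k := by
  induction k generalizing x y with
  | zero => simp [alt]
  | succ k ih => simp [alt, ih]

theorem alt_two_mul (x y : G) (k : ℕ) : alt x y (2 * k) = (x * y) ^ k := by
  induction k with
  | zero => simp [alt]
  | succ k ih => rw [Nat.mul_succ, alt, alt, ih, pow_succ', mul_assoc]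

theorem alt_two_mul_add_one (x y : G) (k : ℕ) : alt x y (2 * k + 1) = (x * y) ^ k * x := by
  rw [alt, alt_two_mul, mul_pow_mul]

end Alternating

section Garside

variable {G : Type*} [Group G] {x y : G} {k : ℕ}

theorem commute_alt_two_mul_left (hb : alt x y (2 * k) = alt y x (2 * k)) :
    Commute x (alt x y (2 * k)) := by
  simp only [alt_two_mul] at hb ⊢
  exact (congrArg (x * ·) hb).trans (mul_pow_mul x y k).symm

theorem commute_alt_two_mul_right (hb : alt x y (2 * k) = alt y x (2 * k)) :
    Commute y (alt x y (2 * k)) := by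
  simp only [alt_two_mul] at hb ⊢
  exact (mul_pow_mul y x k).symm.trans (congrArg (· * y) hb.symm)

theorem mul_alt_two_mul_add_one (hb : alt x y (2 * k + 1) = alt y x (2 * k + 1)) :
    x * alt x y (2 * k + 1) = alt x y (2 * k + 1) * y :=
  calc x * alt x y (2 * k + 1) = x * alt y x (2 * k + 1) := by rw [hb]
    _ = alt x y (2 * k + 1) * y := by
      rw [alt_two_mul_add_one, alt_two_mul_add_one, ← mul_assoc, ← mul_pow_mul]

end Garside

section Orbifold

variable {G : Type*} [Group G] {x w : G}

theorem conj_conj_of_braid (hb : x * w * x * w = w * x * w * x) :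
    w * (w * x * w⁻¹) * w⁻¹ = (w * x * w⁻¹)⁻¹ * x * (w * x * w⁻¹) :=
  calc w * (w * x * w⁻¹) * w⁻¹ = w * x⁻¹ * w⁻¹ * (w * x * w * x) * w⁻¹ * w⁻¹ := by group
    _ = w * x⁻¹ * w⁻¹ * (x * w * x * w) * w⁻¹ * w⁻¹ := by rw [hb]
    _ = (w * x * w⁻¹)⁻¹ * x * (w * x * w⁻¹) := by group

theorem alt_conj_of_braid {m : ℕ} (hw : w ^ m = 1) (hb : x * w * x * w = w * x * w * x) :
    alt x (w * x * w⁻¹) m = alt (w * x * w⁻¹) x m := by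
  -- `x * w * x * w` is central in `⟨x, w⟩`, and `x * (w * x * w⁻¹)` is it times `w⁻²`
  have hcx : Commute (x * w * x * w) x := by
    show _ = x * _
    conv_rhs => rw [hb]
    group
  have hcw : Commute (x * w * x * w) w := by
    show _ = w * _
    conv_lhs => rw [hb]
    group
  have hca : Commute (x * w * x * w) (w * x * w⁻¹) := (hcw.mul_right hcx).mul_right hcw.inv_right
  have hxa : x * (w * x * w⁻¹) = x * w * x * w * (w ^ 2)⁻¹ := by group
  have haw : w * x * w⁻¹ * w = w * x := by group
  generalize w * x * w⁻¹ = a at hca hxa haw ⊢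
  generalize x * w * x * w = c at hcx hcw hca hxa
  have hxa_pow (k : ℕ) : (x * a) ^ k = c ^ k * (w ^ (2 * k))⁻¹ := by
    rw [hxa, (hcw.pow_right 2).inv_right.mul_pow, inv_pow, ← pow_mul]
  have hax_pow (k : ℕ) : (a * x) ^ k = a * (x * a) ^ k * a⁻¹ := by
    rw [← conj_pow, ← mul_assoc, mul_inv_cancel_right]
  obtain ⟨k, rfl | rfl⟩ := Nat.even_or_odd' m
  · rw [alt_two_mul, alt_two_mul, hax_pow, hxa_pow, hw, inv_one, mul_one,
      ← (hca.pow_left k).eq, mul_inv_cancel_right]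
  · have hw' : (w ^ (2 * k))⁻¹ = w := inv_eq_of_mul_eq_one_left (by rwa [← pow_succ'])
    rw [alt_two_mul_add_one, alt_two_mul_add_one, mul_pow_mul a x, hxa_pow, hw',
      ← mul_assoc, ← (hca.pow_left k).eq, mul_assoc, mul_assoc, haw]

end Orbifold

section ZModLift

variable {m : ℕ} {G : Type*} [Group G]

def zmodLift (x : G) (hx : x ^ m = 1) : Multiplicative (ZMod m) →* G :=
  AddMonoidHom.toMultiplicativeLeft <| ZMod.lift m
    ⟨zmultiplesHom (Additive G) (Additive.ofMul x), by simp [← ofMul_pow, hx]⟩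

theorem zmodLift_ofAdd_one (x : G) (hx : x ^ m = 1) :
    zmodLift x hx (Multiplicative.ofAdd 1) = x := by
  have h : zmodLift x hx (Multiplicative.ofAdd ((1 : ℤ) : ZMod m)) = x ^ (1 : ℤ) :=
    congrArg Additive.toMul (ZMod.lift_coe _ _ _)
  simpa using h

theorem exists_ofAdd_one_zpow_eq (g : Multiplicative (ZMod m)) :
    ∃ n : ℤ, Multiplicative.ofAdd (1 : ZMod m) ^ n = g := by
  obtain ⟨n, hn⟩ := ZMod.intCast_surjective g.toAdd
  exact ⟨n, by rw [← ofAdd_zsmul n (1 : ZMod m), zsmul_one, hn]; rfl⟩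

theorem zmod_hom_ext {f g : Multiplicative (ZMod m) →* G}
    (h : f (Multiplicative.ofAdd 1) = g (Multiplicative.ofAdd 1)) : f = g := by
  refine MonoidHom.ext fun x => ?_
  obtain ⟨n, rfl⟩ := exists_ofAdd_one_zpow_eq x
  rw [map_zpow, map_zpow, h]

end ZModLift

theorem map_zpow_apply_of_map_apply {G K : Type*} [Group G] [Group K] (f : G →* K)
    {α : MulAut G} {β : MulAut K} (h : ∀ x, f (α x) = β (f x)) (n : ℤ) (x : G) :
    f ((α ^ n) x) = (β ^ n) (f x) := by
  have h_inv (x : G) : f (α⁻¹ x) = β⁻¹ (f x) := by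
    rw [MulAut.inv_apply, MulAut.inv_apply, MulEquiv.eq_symm_apply, ← h, MulEquiv.apply_symm_apply]
  induction n using Int.induction_on generalizing x with
  | zero => rfl
  | succ n ih => rw [zpow_add_one, zpow_add_one, MulAut.mul_apply, MulAut.mul_apply, ih, h]
  | pred n ih => rw [zpow_sub_one, zpow_sub_one, MulAut.mul_apply, MulAut.mul_apply, ih, h_inv]

section KerEquiv

variable {N G H : Type*} [Group N] [Group G] [Group H] {φ : H →* MulAut N}

open SemidirectProduct in
noncomputable def mulEquivKerOfMulEquivSemidirect (ε : G ≃* N ⋊[φ] H) :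
    N ≃* (rightHom.comp ε.toMonoidHom).ker :=
  .ofBijective ((ε.symm.toMonoidHom.comp inl).codRestrict _ fun n => by simp)
    ⟨fun n n' hn => inl_injective (ε.symm.injective (congrArg Subtype.val hn)), by
      rintro ⟨g, hg⟩
      have hright : (ε g).right = 1 := hg
      refine ⟨(ε g).left, Subtype.ext ?_⟩
      calc ε.symm (inl (ε g).left) = ε.symm (inl (ε g).left * inr (ε g).right) := by
            rw [hright, map_one, mul_one]
        _ = g := by rw [inl_left_mul_inr_right, MulEquiv.symm_apply_apply]⟩

end KerEquiv

namespace A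

variable (m : ℕ)

def h : A m := PresentedGroup.of false

def a : A m := PresentedGroup.of true

theorem braid : alt (h m) (a m) m = alt (a m) (h m) m := by
  have hr := PresentedGroup.one_of_mem (rels := arels m) rfl
  rwa [map_mul, map_inv, mul_inv_eq_one, map_alt, map_alt] at hr

variable {m} {G : Type*} [Group G]

def lift (x y : G) (hxy : alt x y m = alt y x m) : A m →* G :=
  PresentedGroup.toGroup (f := fun b => cond b y x) <| by
    rintro r rfl
    rw [map_mul, map_inv, mul_inv_eq_one, map_alt, map_alt]
    simpa [ah, aa] using hxy

@[simp]
theorem lift_h (x y : G) (hxy : alt x y m = alt y x m) : lift x y hxy (h m) = x :=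
  PresentedGroup.toGroup.of _

@[simp]
theorem lift_a (x y : G) (hxy : alt x y m = alt y x m) : lift x y hxy (a m) = y :=
  PresentedGroup.toGroup.of _

theorem hom_ext {f g : A m →* G} (hh : f (h m) = g (h m)) (ha : f (a m) = g (a m)) : f = g :=
  PresentedGroup.ext (Bool.forall_bool.2 ⟨hh, ha⟩)

theorem mulAut_ext {f g : MulAut (A m)} (hh : f (h m) = g (h m)) (ha : f (a m) = g (a m)) :
    f = g :=
  MulEquiv.toMonoidHom_injective (hom_ext hh ha)

end A

namespace Z

variable (m : ℕ)

def h₁ : Z m := PresentedGroup.of false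

def u : Z m := PresentedGroup.of true

theorem u_pow : u m ^ m = 1 := by
  have hr := PresentedGroup.one_of_mem (rels := zrels m) (Or.inl rfl)
  rwa [map_pow] at hr

theorem braid : h₁ m * u m * h₁ m * u m = u m * h₁ m * u m * h₁ m := by
  have hr := PresentedGroup.one_of_mem (rels := zrels m) (Or.inr rfl)
  rw [map_mul, map_inv, mul_inv_eq_one] at hr
  simp only [map_mul, mul_assoc] at hr ⊢
  exact hr

variable {m} {G : Type*} [Group G]

def lift (x w : G) (hw : w ^ m = 1) (hb : x * w * x * w = w * x * w * x) : Z m →* G :=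
  PresentedGroup.toGroup (f := fun b => cond b w x) <| by
    rintro r (rfl | rfl)
    · simpa [zu] using hw
    · rw [map_mul, map_inv, mul_inv_eq_one]
      simpa [zh, zu, mul_assoc] using hb

@[simp]
theorem lift_h₁ (x w : G) (hw : w ^ m = 1) (hb : x * w * x * w = w * x * w * x) :
    lift x w hw hb (h₁ m) = x :=
  PresentedGroup.toGroup.of _

@[simp]
theorem lift_u (x w : G) (hw : w ^ m = 1) (hb : x * w * x * w = w * x * w * x) :
    lift x w hw hb (u m) = w :=
  PresentedGroup.toGroup.of _

theorem hom_ext {f g : Z m →* G} (hh : f (h₁ m) = g (h₁ m)) (hu : f (u m) = g (u m)) : f = g :=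
  PresentedGroup.ext (Bool.forall_bool.2 ⟨hh, hu⟩)

end Z

namespace A

variable (m : ℕ)

def swap : MulAut (A m) :=
  MonoidHom.toMulEquiv (lift (a m) (h m) (braid m).symm) (lift (a m) (h m) (braid m).symm)
    (hom_ext (by simp) (by simp)) (hom_ext (by simp) (by simp))

@[simp]
theorem swap_h : swap m (h m) = a m := by simp [swap]

@[simp]
theorem swap_a : swap m (a m) = h m := by simp [swap]

-- Under `h ↦ h₁`, `a ↦ u h₁ u⁻¹` this becomes conjugation by `u` (see `toZ_shift`).
def shift : MulAut (A m) := MulAut.conj (a m)⁻¹ * swap m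

@[simp]
theorem shift_h : shift m (h m) = a m := by simp [shift]

@[simp]
theorem shift_a : shift m (a m) = (a m)⁻¹ * h m * a m := by simp [shift]

theorem shift_sq : shift m ^ 2 = MulAut.conj (h m * a m)⁻¹ :=
  mulAut_ext (by simp [sq]) (by simp [sq]; group)

theorem shift_pow_two_mul (k : ℕ) :
    shift m ^ (2 * k) = MulAut.conj (alt (h m) (a m) (2 * k))⁻¹ := by
  rw [pow_mul, shift_sq, ← map_pow, inv_pow, alt_two_mul]

theorem shift_pow_self : shift m ^ m = 1 := by
  obtain ⟨k, rfl | rfl⟩ := Nat.even_or_odd' m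
  · have hb := braid (2 * k)
    rw [shift_pow_two_mul]
    refine mulAut_ext ?_ ?_ <;>
      rw [MulAut.conj_apply, inv_inv, MulAut.one_apply, mul_assoc, inv_mul_eq_iff_eq_mul]
    · exact (commute_alt_two_mul_left hb).eq
    · exact (commute_alt_two_mul_right hb).eq
  · have hb := braid (2 * k + 1)
    rw [pow_succ, shift_pow_two_mul]
    refine mulAut_ext ?_ ?_ <;> rw [MulAut.mul_apply, MulAut.conj_apply, inv_inv,
      MulAut.one_apply, mul_assoc, inv_mul_eq_iff_eq_mul]
    · calc shift _ (h _) * alt (h _) (a _) (2 * k) = alt (a _) (h _) (2 * k + 1) := by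
            rw [shift_h, alt]
        _ = alt (h _) (a _) (2 * k) * h _ := by
            rw [← hb, alt_two_mul, alt_two_mul_add_one]
    · have key := mul_alt_two_mul_add_one hb
      rw [hb] at key
      calc shift _ (a _) * alt (h _) (a _) (2 * k)
          = (a _)⁻¹ * (h _ * alt (a _) (h _) (2 * k + 1)) := by rw [shift_a, alt]; group
        _ = alt (h _) (a _) (2 * k) * a _ := by rw [key, alt]; group

def shiftAction : Multiplicative (ZMod m) →* MulAut (A m) := zmodLift (shift m) (shift_pow_self m)

@[simp]
theorem shiftAction_ofAdd_one : shiftAction m (Multiplicative.ofAdd 1) = shift m :=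
  zmodLift_ofAdd_one _ _

def toZ : A m →* Z m :=
  lift (Z.h₁ m) (Z.u m * Z.h₁ m * (Z.u m)⁻¹) (alt_conj_of_braid (Z.u_pow m) (Z.braid m))

@[simp]
theorem toZ_h : toZ m (h m) = Z.h₁ m := lift_h _ _ _

@[simp]
theorem toZ_a : toZ m (a m) = Z.u m * Z.h₁ m * (Z.u m)⁻¹ := lift_a _ _ _

theorem toZ_shift (z : A m) : toZ m (shift m z) = MulAut.conj (Z.u m) (toZ m z) := by
  have hcomp :
      (toZ m).comp (shift m).toMonoidHom = (MulAut.conj (Z.u m)).toMonoidHom.comp (toZ m) :=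
    hom_ext (by simp) (by simp [conj_conj_of_braid (Z.braid m)])
  exact DFunLike.congr_fun hcomp z

end A

namespace Z

variable (m : ℕ)

def ofZMod : Multiplicative (ZMod m) →* Z m := zmodLift (u m) (u_pow m)

@[simp]
theorem ofZMod_ofAdd_one : ofZMod m (Multiplicative.ofAdd 1) = u m := zmodLift_ofAdd_one _ _

abbrev Semidirect := A m ⋊[A.shiftAction m] Multiplicative (ZMod m)

def toSemidirect : Z m →* Semidirect m :=
  lift (.inl (A.h m)) (.inr (.ofAdd 1))
    (by rw [← map_pow, ← ofAdd_nsmul, nsmul_one, ZMod.natCast_self, ofAdd_zero, map_one])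
    (by ext <;> simp [MulAut.mul_apply]; group)

def ofSemidirect : Semidirect m →* Z m :=
  SemidirectProduct.lift (A.toZ m) (ofZMod m) fun g => by
    obtain ⟨n, rfl⟩ := exists_ofAdd_one_zpow_eq g
    refine MonoidHom.ext fun z => ?_
    simpa [map_zpow] using map_zpow_apply_of_map_apply (A.toZ m) (A.toZ_shift m) n z

theorem ofSemidirect_comp_toSemidirect : (ofSemidirect m).comp (toSemidirect m) = .id _ :=
  hom_ext (by simp [toSemidirect, ofSemidirect]) (by simp [toSemidirect, ofSemidirect])

theorem toSemidirect_comp_toZ : (toSemidirect m).comp (A.toZ m) = SemidirectProduct.inl :=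
  A.hom_ext (by simp [toSemidirect]) (by
    simp only [MonoidHom.comp_apply, A.toZ_a, map_mul, map_inv, toSemidirect, lift_u, lift_h₁]
    rw [← map_inv, ← SemidirectProduct.inl_aut, A.shiftAction_ofAdd_one, A.shift_h])

theorem toSemidirect_comp_ofZMod : (toSemidirect m).comp (ofZMod m) = SemidirectProduct.inr :=
  zmod_hom_ext (by simp [toSemidirect])

def semidirectEquiv : Z m ≃* Semidirect m :=
  MonoidHom.toMulEquiv (toSemidirect m) (ofSemidirect m) (ofSemidirect_comp_toSemidirect m)
    (SemidirectProduct.hom_ext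
      (by rw [MonoidHom.comp_assoc, ofSemidirect, SemidirectProduct.lift_comp_inl,
        toSemidirect_comp_toZ, MonoidHom.id_comp])
      (by rw [MonoidHom.comp_assoc, ofSemidirect, SemidirectProduct.lift_comp_inr,
        toSemidirect_comp_ofZMod, MonoidHom.id_comp]))

def toZMod : Z m →* Multiplicative (ZMod m) :=
  SemidirectProduct.rightHom.comp (semidirectEquiv m).toMonoidHom

@[simp]
theorem toZMod_h₁ : toZMod m (h₁ m) = 1 := by
  simp [toZMod, semidirectEquiv, toSemidirect]

@[simp]
theorem toZMod_u : toZMod m (u m) = Multiplicative.ofAdd 1 := by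
  simp [toZMod, semidirectEquiv, toSemidirect]

noncomputable def kerEquiv : A m ≃* (toZMod m).ker :=
  mulEquivKerOfMulEquivSemidirect (semidirectEquiv m)

theorem coe_kerEquiv (z : A m) : (kerEquiv m z : Z m) = A.toZ m z := by
  show ofSemidirect m (.inl z) = _
  exact SemidirectProduct.lift_inl ..

theorem toZMod_comp_ofZMod : (toZMod m).comp (ofZMod m) = MonoidHom.id _ :=
  zmod_hom_ext (by simp)

end Z

theorem stmt_4_general (m : ℕ) :
    ∃ (π : Z m →* Multiplicative (ZMod m))
      (s : Multiplicative (ZMod m) →* Z m)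
      (e : A m ≃* π.ker),
      Function.Surjective π ∧
      π (PresentedGroup.of false) = 1 ∧
      π (PresentedGroup.of true) = Multiplicative.ofAdd (1 : ZMod m) ∧
      π.comp s = MonoidHom.id _ ∧
      s (Multiplicative.ofAdd (1 : ZMod m)) = PresentedGroup.of true ∧
      (e (PresentedGroup.of false) : Z m) = PresentedGroup.of false ∧
      (e (PresentedGroup.of true) : Z m) =
        PresentedGroup.of true * PresentedGroup.of false * (PresentedGroup.of true)⁻¹ := by
  have hsection := Z.toZMod_comp_ofZMod m
  refine ⟨Z.toZMod m, Z.ofZMod m, Z.kerEquiv m,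
    fun g => ⟨Z.ofZMod m g, DFunLike.congr_fun hsection g⟩, Z.toZMod_h₁ m, Z.toZMod_u m,
    hsection, Z.ofZMod_ofAdd_one m, ?_, ?_⟩ <;>
    rw [Z.coe_kerEquiv]
  exacts [A.toZ_h m, A.toZ_a m]

theorem stmt_4 (m : ℕ) (hm : 2 ≤ m) :
    ∃ (π : Z m →* Multiplicative (ZMod m))
      (s : Multiplicative (ZMod m) →* Z m)
      (e : A m ≃* π.ker),
      Function.Surjective π ∧
      π (PresentedGroup.of false) = 1 ∧
      π (PresentedGroup.of true) = Multiplicative.ofAdd (1 : ZMod m) ∧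
      π.comp s = MonoidHom.id _ ∧
      s (Multiplicative.ofAdd (1 : ZMod m)) = PresentedGroup.of true ∧
      (e (PresentedGroup.of false) : Z m) = PresentedGroup.of false ∧
      (e (PresentedGroup.of true) : Z m) =
        PresentedGroup.of true * PresentedGroup.of false * (PresentedGroup.of true)⁻¹ :=
  stmt_4_general m

end Stmt4
end

section
/- Let n ≥ 3, N ≥ 1, L ≥ 0 and m_1, …, m_N ≥ 2. In the group Z_n(Σ_Γ(L)), the relation (h_1 u_1 h_1 u_1^{-1} h_2)^2 = (h_2 h_1 u_1 h_1 u_1^{-1})^2 holds. -/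
namespace StmtS

/-- Generators of `Z_n(Σ_Γ(L))`: `Sum.inl i` is `h_{i+1}`, `Sum.inr (Sum.inl l)` is the
puncture generator `t_{l+1}`, and `Sum.inr (Sum.inr v)` is the cone-point generator
`u_{v+1}`. -/
abbrev Gen (n L N : ℕ) := Fin (n - 1) ⊕ (Fin L ⊕ Fin N)

def sh {n L N : ℕ} (i : Fin (n - 1)) : FreeGroup (Gen n L N) := FreeGroup.of (Sum.inl i)

def st {n L N : ℕ} (l : Fin L) : FreeGroup (Gen n L N) := FreeGroup.of (Sum.inr (Sum.inl l))

def su {n L N : ℕ} (v : Fin N) : FreeGroup (Gen n L N) := FreeGroup.of (Sum.inr (Sum.inr v))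

/-- Defining relations of `Z_n(Σ_Γ(L))` for `Γ = Z_{m_1} * ⋯ * Z_{m_N}`. -/
def srels (n L N : ℕ) (m : Fin N → ℕ) : Set (FreeGroup (Gen n L N)) :=
  {r | (∃ v : Fin N, r = su v ^ m v)
    ∨ (∃ i j : Fin (n - 1), (i : ℕ) + 1 = (j : ℕ) ∧
        r = sh i * sh j * sh i * (sh j * sh i * sh j)⁻¹)
    ∨ (∃ i j : Fin (n - 1), (i : ℕ) + 2 ≤ (j : ℕ) ∧
        r = sh i * sh j * (sh j * sh i)⁻¹)
    ∨ (∃ (l : Fin L) (i : Fin (n - 1)), 1 ≤ (i : ℕ) ∧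
        r = st l * sh i * (sh i * st l)⁻¹)
    ∨ (∃ (v : Fin N) (i : Fin (n - 1)), 1 ≤ (i : ℕ) ∧
        r = su v * sh i * (sh i * su v)⁻¹)
    ∨ (∃ (l : Fin L) (i : Fin (n - 1)), (i : ℕ) = 0 ∧
        r = (sh i * st l * sh i) * st l * (st l * (sh i * st l * sh i))⁻¹)
    ∨ (∃ (v : Fin N) (i : Fin (n - 1)), (i : ℕ) = 0 ∧
        r = (sh i * su v * sh i) * su v * (su v * (sh i * su v * sh i))⁻¹)
    ∨ (∃ (l₁ l₂ : Fin L) (i : Fin (n - 1)), (l₁ : ℕ) < (l₂ : ℕ) ∧ (i : ℕ) = 0 ∧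
        r = st l₁ * ((sh i)⁻¹ * st l₂ * sh i) * (((sh i)⁻¹ * st l₂ * sh i) * st l₁)⁻¹)
    ∨ (∃ (v₁ v₂ : Fin N) (i : Fin (n - 1)), (v₁ : ℕ) < (v₂ : ℕ) ∧ (i : ℕ) = 0 ∧
        r = su v₁ * ((sh i)⁻¹ * su v₂ * sh i) * (((sh i)⁻¹ * su v₂ * sh i) * su v₁)⁻¹)
    ∨ (∃ (l : Fin L) (v : Fin N) (i : Fin (n - 1)), (i : ℕ) = 0 ∧
        r = st l * ((sh i)⁻¹ * su v * sh i) * (((sh i)⁻¹ * su v * sh i) * st l)⁻¹)}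

/-- The orbifold braid group `Z_n(Σ_Γ(L))`. -/
abbrev S (n L N : ℕ) (m : Fin N → ℕ) := PresentedGroup (srels n L N m)

/-- The product `h_1 h_2 ⋯ h_{n-1}` in `Z_n(Σ_Γ(L))`. -/
def hprod (n L N : ℕ) (m : Fin N → ℕ) : S n L N m :=
  (List.ofFn (fun i : Fin (n - 1) => (PresentedGroup.of (Sum.inl i) : S n L N m))).prod

/-- `c_ν = h_{n-1}⁻¹ ⋯ h_1⁻¹ · u_ν · h_1 ⋯ h_{n-1}` in `Z_n(Σ_Γ(L))`. -/
def c (n L N : ℕ) (m : Fin N → ℕ) (v : Fin N) : S n L N m :=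
  (hprod n L N m)⁻¹ * PresentedGroup.of (Sum.inr (Sum.inr v)) * hprod n L N m

/-- `alt x y k` is the alternating product `x y x y ⋯` with `k` factors, starting with `x`. -/
def alt {G : Type*} [Monoid G] (x y : G) : ℕ → G
  | 0 => 1
  | k + 1 => x * alt y x k

theorem key_calc {G : Type*} [Group G] (A B U : G)
    (hbr : A*B*A = B*A*B) (hc : U*B = B*U) (h3 : A*U*A*U = U*(A*U*A)) :
    (A*U*A*U⁻¹*B)^2 = (B*A*U*A*U⁻¹)^2 := by
  -- central word identity: (AUA) commutes with B(AUA)B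
  have E : (A*U*A)*(B*(A*U*A)*B) = (B*(A*U*A)*B)*(A*U*A) := by
    calc (A*U*A)*(B*(A*U*A)*B)
        = A*U*(A*B*A)*(U*(A*B)) := by group
      _ = A*U*(B*A*B)*(U*(A*B)) := by rw [hbr]
      _ = A*(U*B)*((A*(B*U))*(A*B)) := by group
      _ = A*(B*U)*((A*(B*U))*(A*B)) := by rw [hc]
      _ = A*B*(U*A)*((B*U)*(A*B)) := by group
      _ = A*B*(U*A)*((U*B)*(A*B)) := by rw [← hc]
      _ = (A*B)*U*A*(U*(B*A*B)) := by group
      _ = (A*B)*U*A*(U*(A*B*A)) := by rw [← hbr]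
      _ = (A*B)*(U*(A*U*A))*(B*A) := by group
      _ = (A*B)*(A*U*A*U)*(B*A) := by rw [← h3]
      _ = (A*B*A)*(U*(A*(U*B)))*A := by group
      _ = (B*A*B)*(U*(A*(U*B)))*A := by rw [hbr]
      _ = (B*A)*(B*U)*((A*(U*B))*A) := by group
      _ = (B*A)*(U*B)*((A*(U*B))*A) := by rw [← hc]
      _ = ((B*A)*U)*(B*A)*((U*B)*A) := by group
      _ = ((B*A)*U)*(B*A)*((B*U)*A) := by rw [hc]
      _ = (B*A*U)*(B*A*B)*(U*A) := by group
      _ = (B*A*U)*(A*B*A)*(U*A) := by rw [← hbr]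
      _ = (B*(A*U*A)*B)*(A*U*A) := by group
  set b : G := A*U*A with hb
  have hbU : Commute b U := h3
  have hUB : Commute U B := hc
  have hCb : Commute b (B*b*B) := E
  have hUbB : Commute U (B*b*B) := (hUB.mul_right hbU.symm).mul_right hUB
  have hComm : Commute (b*U⁻¹) ((B*b*B)*U⁻¹) :=
    (hCb.mul_right hbU.inv_right).mul_left (hUbB.inv_left.mul_right (Commute.refl U⁻¹))
  have hBaB : B*(b*U⁻¹)*B = (B*b*B)*U⁻¹ := by
    have := hUB.inv_left.eq
    calc B*(b*U⁻¹)*B = B*b*(U⁻¹*B) := by group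
      _ = B*b*(B*U⁻¹) := by rw [hUB.inv_left.eq]
      _ = (B*b*B)*U⁻¹ := by group
  have Comm : (b*U⁻¹)*(B*(b*U⁻¹)*B) = (B*(b*U⁻¹)*B)*(b*U⁻¹) := by
    rw [hBaB]; exact hComm
  calc (A*U*A*U⁻¹*B)^2 = (b*U⁻¹)*(B*(b*U⁻¹)*B)*B⁻¹*B := by rw [sq, hb]; group
    _ = (B*(b*U⁻¹)*B)*(b*U⁻¹)*B⁻¹*B := by rw [Comm]
    _ = (B*A*U*A*U⁻¹)^2 := by rw [sq, hb]; group

theorem stmt_9 (n L N : ℕ) (m : Fin N → ℕ) (hn : 3 ≤ n) (hN : 1 ≤ N) (hL : 0 ≤ L)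
    (hm : ∀ v : Fin N, 2 ≤ m v) :
    ((PresentedGroup.of (Sum.inl ⟨0, by omega⟩) *
        PresentedGroup.of (Sum.inr (Sum.inr ⟨0, by omega⟩)) *
        PresentedGroup.of (Sum.inl ⟨0, by omega⟩) *
        (PresentedGroup.of (Sum.inr (Sum.inr ⟨0, by omega⟩)))⁻¹ *
        PresentedGroup.of (Sum.inl ⟨1, by omega⟩)) ^ 2 : S n L N m) =
      (PresentedGroup.of (Sum.inl ⟨1, by omega⟩) *
        PresentedGroup.of (Sum.inl ⟨0, by omega⟩) *
        PresentedGroup.of (Sum.inr (Sum.inr ⟨0, by omega⟩)) *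
        PresentedGroup.of (Sum.inl ⟨0, by omega⟩) *
        (PresentedGroup.of (Sum.inr (Sum.inr ⟨0, by omega⟩)))⁻¹) ^ 2 := by
  set π : FreeGroup (Gen n L N) →* S n L N m :=
    QuotientGroup.mk' (Subgroup.normalClosure (srels n L N m)) with hπ
  have key : ∀ r ∈ srels n L N m, π r = 1 := fun r hr =>
    (QuotientGroup.eq_one_iff r).2 (Subgroup.subset_normalClosure hr)
  have i0 : Fin (n - 1) := ⟨0, by omega⟩
  set A : S n L N m := PresentedGroup.of (Sum.inl ⟨0, by omega⟩) with hA
  set B : S n L N m := PresentedGroup.of (Sum.inl ⟨1, by omega⟩) with hB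
  set U : S n L N m := PresentedGroup.of (Sum.inr (Sum.inr ⟨0, by omega⟩)) with hU
  have πh0 : π (sh ⟨0, by omega⟩) = A := rfl
  have πh1 : π (sh ⟨1, by omega⟩) = B := rfl
  have πu : π (su ⟨0, by omega⟩) = U := rfl
  have hbr : A * B * A = B * A * B := by
    have h := key _ (Or.inr (Or.inl ⟨⟨0, by omega⟩, ⟨1, by omega⟩, rfl, rfl⟩))
    rw [map_mul, map_inv, map_mul, map_mul, map_mul, mul_inv_eq_one, πh0, πh1] at h
    exact h
  have hc : U * B = B * U := by
    have h := key _ (Or.inr (Or.inr (Or.inr (Or.inr (Or.inl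
      ⟨⟨0, by omega⟩, ⟨1, by omega⟩, le_refl 1, rfl⟩)))))
    rw [map_mul, map_inv, map_mul, mul_inv_eq_one, πh1, πu] at h
    exact h
  have h3 : A * U * A * U = U * (A * U * A) := by
    have h := key _ (Or.inr (Or.inr (Or.inr (Or.inr (Or.inr (Or.inr (Or.inl
      ⟨⟨0, by omega⟩, ⟨0, by omega⟩, rfl, rfl⟩)))))))
    rw [map_mul, map_inv, map_mul, map_mul, map_mul, map_mul, mul_inv_eq_one, πh0, πu] at h
    exact h
  exact key_calc A B U hbr hc h3

end StmtS
end

section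
/- Let n ≥ 3, N ≥ 1, L ≥ 0, m_1, …, m_N ≥ 2, and 1 ≤ ν ≤ N. In the group Z_n(Σ_Γ(L)), set c_ν = h_{n-1}^{-1}⋯h_1^{-1} u_ν h_1⋯h_{n-1}. Then (h_{n-1} c_ν h_{n-1}) c_ν = c_ν (h_{n-1} c_ν h_{n-1}). -/
namespace StmtS

/-! ### Auxiliary machinery -/

theorem key_step' {G : Type*} [Group G] {a b y : G} (hbr : a*b*a = b*a*b) (hc : Commute y b)
    (hk : (a*y*a)*y = y*(a*y*a)) :
    (b*(a⁻¹*y*a)*b)*(a⁻¹*y*a) = (a⁻¹*y*a)*(b*(a⁻¹*y*a)*b) := by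
  have h1 : a * b * a⁻¹ = b⁻¹ * (a * b) := by
    apply mul_left_cancel (a := b)
    rw [← mul_assoc, ← mul_assoc, ← hbr]
    group
  have hyb : b * y = y * b := hc.symm.eq
  have hyb' : b⁻¹ * y = y * b⁻¹ := hc.inv_right.symm.eq
  calc (b*(a⁻¹*y*a)*b)*(a⁻¹*y*a)
      = a⁻¹ * ((a*b*a⁻¹) * y * (a * b) * a⁻¹ * y) * a := by group
    _ = a⁻¹ * ((b⁻¹*(a*b)) * y * (a * b) * a⁻¹ * y) * a := by rw [h1]
    _ = a⁻¹ * (b⁻¹ * a * (b * y) * a * (b * a⁻¹ * y)) * a := by group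
    _ = a⁻¹ * (b⁻¹ * a * (y * b) * a * (b * a⁻¹ * y)) * a := by rw [hyb]
    _ = a⁻¹ * (b⁻¹ * a * y * (b * a * b) * a⁻¹ * y) * a := by group
    _ = a⁻¹ * (b⁻¹ * a * y * (a * b * a) * a⁻¹ * y) * a := by rw [← hbr]
    _ = a⁻¹ * (b⁻¹ * a * y * a * (b * y)) * a := by group
    _ = a⁻¹ * (b⁻¹ * a * y * a * (y * b)) * a := by rw [hyb]
    _ = a⁻¹ * (b⁻¹ * ((a*y*a)*y) * b) * a := by group
    _ = a⁻¹ * (b⁻¹ * (y*(a*y*a)) * b) * a := by rw [hk]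
    _ = a⁻¹ * ((b⁻¹ * y) * (a * y) * (a * b)) * a := by group
    _ = a⁻¹ * ((y * b⁻¹) * (a * y) * (a * b)) * a := by rw [hyb']
    _ = a⁻¹ * y * (b⁻¹ * a * y * (a * b * a)) := by group
    _ = a⁻¹ * y * (b⁻¹ * a * y * (b * a * b)) := by rw [hbr]
    _ = a⁻¹ * y * (b⁻¹ * a * (y * b) * (a * b)) := by group
    _ = a⁻¹ * y * (b⁻¹ * a * (b * y) * (a * b)) := by rw [← hyb]
    _ = a⁻¹ * y * ((b⁻¹ * (a * b)) * y * (a * b)) := by group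
    _ = a⁻¹ * y * ((a * b * a⁻¹) * y * (a * b)) := by rw [← h1]
    _ = (a⁻¹*y*a)*(b*(a⁻¹*y*a)*b) := by group

theorem final' {G : Type*} [Group G] {h y : G} (hk : (h*y*h)*y = y*(h*y*h)) :
    (h*(h⁻¹*y*h)*h)*(h⁻¹*y*h) = (h⁻¹*y*h)*(h*(h⁻¹*y*h)*h) := by
  calc (h*(h⁻¹*y*h)*h)*(h⁻¹*y*h)
      = h⁻¹ * ((h*y*h)*y) * h := by group
    _ = h⁻¹ * (y*(h*y*h)) * h := by rw [hk]
    _ = (h⁻¹*y*h)*(h*(h⁻¹*y*h)*h) := by group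

variable {n L N : ℕ} {m : Fin N → ℕ}

lemma rel_one {r : FreeGroup (Gen n L N)} (hr : r ∈ srels n L N m) :
    (PresentedGroup.mk (srels n L N m) r : S n L N m) = 1 :=
  (QuotientGroup.eq_one_iff r).mpr (Subgroup.subset_normalClosure hr)

/-- `g j = h_{j+1}` for `j < n-1`, junk value `1` otherwise. -/
def g (n L N : ℕ) (m : Fin N → ℕ) (j : ℕ) : S n L N m :=
  if h : j < n - 1 then PresentedGroup.of (Sum.inl ⟨j, h⟩) else 1

def Ug (n L N : ℕ) (m : Fin N → ℕ) (v : Fin N) : S n L N m :=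
  PresentedGroup.of (Sum.inr (Sum.inr v))

def Pg (n L N : ℕ) (m : Fin N → ℕ) (k : ℕ) : S n L N m :=
  ((List.range k).map (g n L N m)).prod

def Yg (n L N : ℕ) (m : Fin N → ℕ) (v : Fin N) (k : ℕ) : S n L N m :=
  (Pg n L N m k)⁻¹ * Ug n L N m v * Pg n L N m k

lemma g_eq (j : ℕ) (h : j < n - 1) :
    (PresentedGroup.of (Sum.inl ⟨j, h⟩) : S n L N m) = g n L N m j := by
  simp only [g, dif_pos h]

lemma g_braid {j : ℕ} (hj : j + 1 < n - 1) :
    g n L N m j * g n L N m (j+1) * g n L N m j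
      = g n L N m (j+1) * g n L N m j * g n L N m (j+1) := by
  have h0 : j < n - 1 := by omega
  have hr := rel_one (m := m)
    (r := (sh ⟨j, h0⟩ * sh ⟨j+1, hj⟩ * sh ⟨j, h0⟩ *
      (sh ⟨j+1, hj⟩ * sh ⟨j, h0⟩ * sh ⟨j+1, hj⟩)⁻¹ : FreeGroup (Gen n L N)))
    (Or.inr (Or.inl ⟨⟨j, h0⟩, ⟨j+1, hj⟩, rfl, rfl⟩))
  simp only [sh, map_mul, map_inv, mul_inv_eq_one] at hr
  rw [← g_eq j h0, ← g_eq (j+1) hj]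
  exact hr

lemma g_comm {i j : ℕ} (hij : i + 2 ≤ j) (hj : j < n - 1) :
    Commute (g n L N m i) (g n L N m j) := by
  have h0 : i < n - 1 := by omega
  have hr := rel_one (m := m)
    (r := (sh ⟨i, h0⟩ * sh ⟨j, hj⟩ * (sh ⟨j, hj⟩ * sh ⟨i, h0⟩)⁻¹ : FreeGroup (Gen n L N)))
    (Or.inr (Or.inr (Or.inl ⟨⟨i, h0⟩, ⟨j, hj⟩, hij, rfl⟩)))
  simp only [sh, map_mul, map_inv, mul_inv_eq_one] at hr
  rw [← g_eq i h0, ← g_eq j hj]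
  exact hr

lemma gU_comm (v : Fin N) {j : ℕ} (h1 : 1 ≤ j) (hj : j < n - 1) :
    Commute (Ug n L N m v) (g n L N m j) := by
  have hr := rel_one (m := m)
    (r := (su v * sh ⟨j, hj⟩ * (sh ⟨j, hj⟩ * su v)⁻¹ : FreeGroup (Gen n L N)))
    (Or.inr (Or.inr (Or.inr (Or.inr (Or.inl ⟨v, ⟨j, hj⟩, h1, rfl⟩)))))
  simp only [su, sh, map_mul, map_inv, mul_inv_eq_one] at hr
  rw [← g_eq j hj]
  exact hr

lemma keyrel (v : Fin N) (h0 : 0 < n - 1) :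
    (g n L N m 0 * Ug n L N m v * g n L N m 0) * Ug n L N m v
      = Ug n L N m v * (g n L N m 0 * Ug n L N m v * g n L N m 0) := by
  have hr := rel_one (m := m)
    (r := ((sh ⟨0, h0⟩ * su v * sh ⟨0, h0⟩) * su v *
      (su v * (sh ⟨0, h0⟩ * su v * sh ⟨0, h0⟩))⁻¹ : FreeGroup (Gen n L N)))
    (Or.inr (Or.inr (Or.inr (Or.inr (Or.inr (Or.inr (Or.inl ⟨v, ⟨0, h0⟩, rfl, rfl⟩)))))))
  simp only [su, sh, map_mul, map_inv, mul_inv_eq_one] at hr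
  rw [← g_eq 0 h0]
  exact hr

lemma Pg_succ (k : ℕ) : Pg n L N m (k+1) = Pg n L N m k * g n L N m k := by
  simp [Pg, List.range_succ]

lemma Pg_comm {k j : ℕ} (hkj : k + 1 ≤ j) (hj : j < n - 1) :
    Commute (g n L N m j) (Pg n L N m k) := by
  induction k with
  | zero => simp [Pg, Commute.one_right]
  | succ k ih =>
      rw [Pg_succ]
      exact (ih (by omega)).mul_right (g_comm (by omega) hj).symm

lemma Yg_succ (v : Fin N) (k : ℕ) :
    Yg n L N m v (k+1) = (g n L N m k)⁻¹ * Yg n L N m v k * g n L N m k := by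
  simp [Yg, Pg_succ, mul_inv_rev, mul_assoc]

lemma Yg_comm (v : Fin N) {k j : ℕ} (hkj : k + 1 ≤ j) (hj : j < n - 1) :
    Commute (Yg n L N m v k) (g n L N m j) :=
  (((Pg_comm hkj hj).inv_right.mul_right (gU_comm v (by omega) hj).symm).mul_right
    (Pg_comm hkj hj)).symm

lemma Rlem (v : Fin N) : ∀ k, k + 1 ≤ n - 1 →
    (g n L N m k * Yg n L N m v k * g n L N m k) * Yg n L N m v k
      = Yg n L N m v k * (g n L N m k * Yg n L N m v k * g n L N m k) := by
  intro k
  induction k with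
  | zero =>
      intro hk
      have h0 : Yg n L N m v 0 = Ug n L N m v := by simp [Yg, Pg]
      rw [h0]
      exact keyrel v (by omega)
  | succ k ih =>
      intro hk
      rw [Yg_succ]
      exact key_step' (g_braid (by omega)) (Yg_comm v (le_refl _) (by omega)) (ih (by omega))

lemma hprod_eq : hprod n L N m = Pg n L N m (n - 1) := by
  unfold hprod Pg
  congr 1
  apply List.ext_getElem
  · simp
  · intro i h1 h2
    simp only [List.getElem_ofFn, List.getElem_map, List.getElem_range]
    rw [g_eq]

theorem stmt_11 (n L N : ℕ) (m : Fin N → ℕ) (hn : 3 ≤ n) (hN : 1 ≤ N) (hL : 0 ≤ L)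
    (hm : ∀ v : Fin N, 2 ≤ m v) (ν : Fin N) :
    ((PresentedGroup.of (Sum.inl ⟨n - 2, by omega⟩) : S n L N m) * c n L N m ν *
        PresentedGroup.of (Sum.inl ⟨n - 2, by omega⟩)) * c n L N m ν =
      c n L N m ν * (PresentedGroup.of (Sum.inl ⟨n - 2, by omega⟩) * c n L N m ν *
        PresentedGroup.of (Sum.inl ⟨n - 2, by omega⟩)) := by
  have hn2 : n - 2 < n - 1 := by omega
  have hc : c n L N m ν = (g n L N m (n-2))⁻¹ * Yg n L N m ν (n-2) * g n L N m (n-2) := by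
    have h1 : c n L N m ν = Yg n L N m ν (n - 1) := by
      unfold c Yg
      rw [hprod_eq]
      rfl
    have h2 : n - 1 = (n - 2) + 1 := by omega
    rw [h1, h2, Yg_succ]
  simp only [g_eq (n-2) hn2, hc]
  exact final' (Rlem ν (n-2) (by omega))

end StmtS
end

section
/- Let n ≥ 1 and m ≥ 2. In the group Z_n(D_{Z_m}), define γ_j = h_{j-1}⋯h_1 u h_1⋯h_{j-1} for 1 ≤ j ≤ n (so γ_1 = u), and define θ_n = γ_n γ_{n-1} ⋯ γ_1. Then θ_n lies in the center of Z_n(D_{Z_m}), i.e. θ_n commutes with every element of Z_n(D_{Z_m}). -/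
namespace Stmt13

/-- Generators of `Z_n(D_{Z_m})`: `some i` is `h_{i+1}` for `i : Fin (n-1)`, `none` is `u`. -/
abbrev Gen (n : ℕ) := Option (Fin (n - 1))

def H {n : ℕ} (i : Fin (n - 1)) : FreeGroup (Gen n) := FreeGroup.of (some i)

def U {n : ℕ} : FreeGroup (Gen n) := FreeGroup.of none

/-- Defining relations of `Z_n(D_{Z_m})`. -/
def zrels (n m : ℕ) : Set (FreeGroup (Gen n)) :=
  {r | r = U ^ m
    ∨ (∃ i j : Fin (n - 1), (i : ℕ) + 1 = (j : ℕ) ∧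
        r = H i * H j * H i * (H j * H i * H j)⁻¹)
    ∨ (∃ i j : Fin (n - 1), (i : ℕ) + 2 ≤ (j : ℕ) ∧
        r = H i * H j * (H j * H i)⁻¹)
    ∨ (∃ i : Fin (n - 1), 1 ≤ (i : ℕ) ∧ r = U * H i * (H i * U)⁻¹)
    ∨ (∃ i : Fin (n - 1), (i : ℕ) = 0 ∧
        r = (H i * U * H i) * U * (U * (H i * U * H i))⁻¹)}

/-- The orbifold braid group `Z_n(D_{Z_m})`. -/
abbrev Z (n m : ℕ) := PresentedGroup (zrels n m)

/-- `h_j` (1-based) as an element of `Z_n(D_{Z_m})`; equal to `1` when out of range. -/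
def hh (n m : ℕ) (j : ℕ) : Z n m :=
  if hj : j - 1 < n - 1 then PresentedGroup.of (some ⟨j - 1, hj⟩) else 1

def uu (n m : ℕ) : Z n m := PresentedGroup.of none

/-- `γ_j = h_{j-1} ⋯ h_1 · u · h_1 ⋯ h_{j-1}`. -/
def γ (n m : ℕ) (j : ℕ) : Z n m :=
  (((List.range (j - 1)).map (fun k => hh n m (k + 1))).reverse).prod * uu n m *
    ((List.range (j - 1)).map (fun k => hh n m (k + 1))).prod

/-- `θ_n = γ_n γ_{n-1} ⋯ γ_1`. -/
def θ (n m : ℕ) : Z n m :=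
  (((List.range n).map (fun k => γ n m (k + 1))).reverse).prod


/-!
Write `h_i`, `u`, `γ_j` for `hh n m i`, `uu n m`, `γ n m j`. The recursion `γ_{j+1} = h_j γ_j h_j`
propagates the defining relations: `u` commutes with every `γ_j` (for `γ_2 = h_1 u h_1` this is the
orbifold relation, afterwards `u` commutes with `h_j`, `j ≥ 2`). The generator `h_i` commutes with
`γ_j` for `j < i` by far commutation, and for `j ≥ i + 2` by the braid relation
`h_i (h_{i+1} h_i γ_i h_i h_{i+1}) = (h_{i+1} h_i γ_i h_i h_{i+1}) h_i`. Finally `h_i` commutes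
with `γ_{i+1} γ_i = h_i (γ_i h_i γ_i)`, since `h_i` commutes with `γ_i h_i γ_i` by induction on `i`
(the case `i = 1` is again the orbifold relation). So `h_i` commutes with
`θ_n = γ_n ⋯ γ_{i+2} (γ_{i+1} γ_i) γ_{i-1} ⋯ γ_1`, and `θ_n` commutes with all generators.
-/

section BraidIdentities

variable {G : Type*} [Group G] {a b c : G}

theorem mul_mul_mul_of_braid (hab : a * b * a = b * a * b) (x : G) :
    a * (b * (a * x)) = b * (a * (b * x)) := by
  simp only [← mul_assoc, hab]

theorem mul_mul_of_braid (hab : a * b * a = b * a * b) : a * (b * a) = b * (a * b) := by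
  simp only [← mul_assoc, hab]

theorem commute_conj_of_braid (hab : a * b * a = b * a * b) (hbc : Commute b c) :
    Commute a (b * (a * c * a) * b) := by
  show a * (b * (a * c * a) * b) = b * (a * c * a) * b * a
  calc a * (b * (a * c * a) * b)
      = b * (a * (b * (c * (a * b)))) := by simp only [mul_assoc, mul_mul_mul_of_braid hab]
    _ = b * (a * (c * (a * (b * a)))) := by rw [hbc.left_comm, ← mul_mul_of_braid hab]
    _ = b * (a * c * a) * b * a := by simp only [mul_assoc]

theorem commute_conj_mul_conj_of_braid (hab : a * b * a = b * a * b) (hbc : Commute b c)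
    (hac : Commute a (c * a * c)) :
    Commute b (a * c * a * b * (a * c * a)) := by
  have hab' := mul_mul_mul_of_braid hab
  have hbc' := hbc.left_comm
  have hcb' := hbc.symm.left_comm
  have hac' : ∀ x : G, a * (c * (a * (c * x))) = c * (a * (c * (a * x))) := fun x => by
    simpa only [mul_assoc] using congrArg (· * x) hac.eq
  show b * (a * c * a * b * (a * c * a)) = a * c * a * b * (a * c * a) * b
  simp only [mul_assoc]
  calc b * (a * (c * (a * (b * (a * (c * a))))))
      = b * (a * (c * (b * (a * (b * (c * a)))))) := by rw [hab' (c * a)]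
    _ = b * (a * (b * (c * (a * (c * (b * a)))))) := by rw [hcb' (a * (b * (c * a))), hbc' a]
    _ = a * (b * (a * (c * (a * (c * (b * a)))))) := by rw [← hab']
    _ = a * (b * (c * (a * (c * (a * (b * a)))))) := by rw [hac' (b * a)]
    _ = a * (c * (b * (a * (c * (b * (a * b)))))) := by
        rw [hbc' (a * (c * (a * (b * a)))), mul_mul_of_braid hab]
    _ = a * (c * (b * (a * (b * (c * (a * b)))))) := by rw [hcb' (a * b)]
    _ = a * (c * (a * (b * (a * (c * (a * b)))))) := by rw [← hab' (c * (a * b))]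

end BraidIdentities

theorem mem_center_of_forall_commute_of {α : Type*} {rels : Set (FreeGroup α)}
    {z : PresentedGroup rels} (hz : ∀ x, Commute (PresentedGroup.of x) z) :
    z ∈ Subgroup.center (PresentedGroup rels) := by
  rw [← Subgroup.centralizer_univ, ← Subgroup.coe_top, ← PresentedGroup.closure_range_of,
    Subgroup.centralizer_closure]
  rintro _ ⟨x, rfl⟩
  exact (hz x).eq

section Relations

variable {n m : ℕ}

theorem of_some_eq_hh (i : Fin (n - 1)) :
    (PresentedGroup.of (some i) : Z n m) = hh n m (i + 1) := by
  simp [hh]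

theorem mk_H (i : Fin (n - 1)) : PresentedGroup.mk (zrels n m) (H i) = hh n m (i + 1) :=
  of_some_eq_hh i

theorem mk_U : PresentedGroup.mk (zrels n m) U = uu n m := rfl

theorem hh_eq_one {j : ℕ} (hj : n ≤ j) : hh n m j = 1 :=
  dif_neg (by omega)

theorem hh_braid {j : ℕ} (hj : 1 ≤ j) (hjn : j + 1 < n) :
    hh n m j * hh n m (j + 1) * hh n m j = hh n m (j + 1) * hh n m j * hh n m (j + 1) := by
  obtain ⟨i, rfl⟩ : ∃ i, j = i + 1 := ⟨j - 1, by omega⟩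
  have h := PresentedGroup.mk_eq_mk_of_mul_inv_mem (rels := zrels n m)
    (Or.inr (Or.inl ⟨⟨i, by omega⟩, ⟨i + 1, by omega⟩, rfl, rfl⟩))
  simpa only [map_mul, mk_H] using h

theorem commute_hh_hh {i j : ℕ} (hi : 1 ≤ i) (hij : i + 2 ≤ j) :
    Commute (hh n m i) (hh n m j) := by
  rcases lt_or_ge j n with hjn | hjn
  · obtain ⟨i, rfl⟩ : ∃ k, i = k + 1 := ⟨i - 1, by omega⟩
    obtain ⟨j, rfl⟩ : ∃ k, j = k + 1 := ⟨j - 1, by omega⟩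
    have h := PresentedGroup.mk_eq_mk_of_mul_inv_mem (rels := zrels n m)
      (Or.inr (Or.inr (Or.inl ⟨⟨i, by omega⟩, ⟨j, by omega⟩, by dsimp only; omega, rfl⟩)))
    simp only [map_mul, mk_H] at h
    exact h
  · rw [hh_eq_one hjn]
    exact Commute.one_right _

theorem commute_uu_hh {i : ℕ} (hi : 2 ≤ i) : Commute (uu n m) (hh n m i) := by
  rcases lt_or_ge i n with hin | hin
  · obtain ⟨i, rfl⟩ : ∃ k, i = k + 1 := ⟨i - 1, by omega⟩
    have h := PresentedGroup.mk_eq_mk_of_mul_inv_mem (rels := zrels n m)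
      (Or.inr (Or.inr (Or.inr (Or.inl ⟨⟨i, by omega⟩, by dsimp only; omega, rfl⟩))))
    simp only [map_mul, mk_H, mk_U] at h
    exact h
  · rw [hh_eq_one hin]
    exact Commute.one_right _

theorem commute_hh_one_uu_hh_one_uu : Commute (hh n m 1 * uu n m * hh n m 1) (uu n m) := by
  rcases lt_or_ge 1 n with hn | hn
  · have h := PresentedGroup.mk_eq_mk_of_mul_inv_mem (rels := zrels n m)
      (Or.inr (Or.inr (Or.inr (Or.inr ⟨⟨0, by omega⟩, rfl, rfl⟩))))
    simp only [map_mul, mk_H, mk_U, zero_add] at h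
    exact h
  · simp only [hh_eq_one hn, one_mul, mul_one]
    exact Commute.refl _

end Relations

section Gamma

variable {n m : ℕ}

@[simp] theorem γ_one : γ n m 1 = uu n m := by
  simp [γ]

theorem γ_succ {j : ℕ} (hj : 1 ≤ j) : γ n m (j + 1) = hh n m j * γ n m j * hh n m j := by
  obtain ⟨i, rfl⟩ : ∃ k, j = k + 1 := ⟨j - 1, by omega⟩
  simp [γ, List.range_succ, mul_assoc]

theorem commute_uu_γ {j : ℕ} (hj : 1 ≤ j) : Commute (uu n m) (γ n m j) := by
  induction j, hj using Nat.le_induction with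
  | base => simp
  | succ j hj ih =>
    rw [γ_succ hj]
    rcases hj.eq_or_lt with rfl | hj
    · simpa using commute_hh_one_uu_hh_one_uu.symm
    · exact ((commute_uu_hh hj).mul_right ih).mul_right (commute_uu_hh hj)

theorem commute_hh_γ_of_lt {i j : ℕ} (hj : 1 ≤ j) (hji : j < i) :
    Commute (hh n m i) (γ n m j) := by
  induction j, hj using Nat.le_induction with
  | base => simpa using (commute_uu_hh (by omega)).symm
  | succ j hj ih =>
    have hij : Commute (hh n m i) (hh n m j) := (commute_hh_hh hj (by omega)).symm
    rw [γ_succ hj]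
    exact (hij.mul_right (ih (by omega))).mul_right hij

theorem commute_hh_γ_of_add_two_le {i j : ℕ} (hi : 1 ≤ i) (hin : i + 2 ≤ n) (hij : i + 2 ≤ j) :
    Commute (hh n m i) (γ n m j) := by
  induction j, hij using Nat.le_induction with
  | base =>
    rw [γ_succ (by omega), γ_succ hi]
    exact commute_conj_of_braid (hh_braid hi (by omega)) (commute_hh_γ_of_lt hi (by omega))
  | succ j hj ih =>
    have hij : Commute (hh n m i) (hh n m j) := commute_hh_hh hi hj
    rw [γ_succ (by omega)]
    exact (hij.mul_right ih).mul_right hij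

theorem commute_hh_γ_mul_hh_mul_γ {j : ℕ} (hj : 1 ≤ j) (hjn : j < n) :
    Commute (hh n m j) (γ n m j * hh n m j * γ n m j) := by
  induction j, hj using Nat.le_induction with
  | base =>
    show hh n m 1 * (γ n m 1 * hh n m 1 * γ n m 1) = γ n m 1 * hh n m 1 * γ n m 1 * hh n m 1
    simpa only [γ_one, mul_assoc] using commute_hh_one_uu_hh_one_uu.eq
  | succ j hj ih =>
    rw [γ_succ hj]
    exact commute_conj_mul_conj_of_braid (hh_braid hj hjn)
      (commute_hh_γ_of_lt hj (by omega)) (ih (by omega))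

theorem commute_hh_γ_succ_mul_γ {j : ℕ} (hj : 1 ≤ j) (hjn : j < n) :
    Commute (hh n m j) (γ n m (j + 1) * γ n m j) := by
  rw [γ_succ hj, mul_assoc, mul_assoc]
  refine (Commute.refl _).mul_right ?_
  simpa only [mul_assoc] using commute_hh_γ_mul_hh_mul_γ (m := m) hj hjn

end Gamma

def Θ (n m k : ℕ) : Z n m := (((List.range k).map (fun t => γ n m (t + 1))).reverse).prod

section Theta

variable {n m : ℕ}

theorem θ_eq_Θ : θ n m = Θ n m n := rfl

theorem Θ_succ (k : ℕ) : Θ n m (k + 1) = γ n m (k + 1) * Θ n m k := by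
  simp [Θ, List.range_succ]

theorem commute_uu_Θ (k : ℕ) : Commute (uu n m) (Θ n m k) := by
  induction k with
  | zero => exact Commute.one_right _
  | succ k ih => rw [Θ_succ]; exact (commute_uu_γ (by omega)).mul_right ih

theorem commute_hh_Θ_of_lt {i k : ℕ} (hki : k < i) : Commute (hh n m i) (Θ n m k) := by
  induction k with
  | zero => exact Commute.one_right _
  | succ k ih => rw [Θ_succ]; exact (commute_hh_γ_of_lt (by omega) hki).mul_right (ih (by omega))

theorem commute_hh_Θ_of_gt {i k : ℕ} (hi : 1 ≤ i) (hik : i < k) (hkn : k ≤ n) :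
    Commute (hh n m i) (Θ n m k) := by
  induction k, hik using Nat.le_induction with
  | base =>
    obtain ⟨j, rfl⟩ : ∃ j, i = j + 1 := ⟨i - 1, by omega⟩
    rw [Θ_succ, Θ_succ, ← mul_assoc]
    exact (commute_hh_γ_succ_mul_γ hi (by omega)).mul_right (commute_hh_Θ_of_lt (by omega))
  | succ k hk ih =>
    rw [Θ_succ]
    exact (commute_hh_γ_of_add_two_le hi (by omega) (by omega)).mul_right (ih (by omega))

end Theta

theorem stmt_13_general (n m : ℕ) :
    θ n m ∈ Subgroup.center (Z n m) := by
  refine mem_center_of_forall_commute_of fun x => ?_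
  rw [θ_eq_Θ]
  cases x with
  | none => exact commute_uu_Θ n
  | some i => rw [of_some_eq_hh]; exact commute_hh_Θ_of_gt (by omega) (by omega) le_rfl

theorem stmt_13 (n m : ℕ) (hn : 1 ≤ n) (hm : 2 ≤ m) :
    θ n m ∈ Subgroup.center (Z n m) :=
  stmt_13_general n m

end Stmt13
end

section
/- Let n ≥ 2 and m ≥ 2. In the group Z_n(D_{Z_m}), the element θ_n = γ_n γ_{n-1} ⋯ γ_1, where γ_j = h_{j-1}⋯h_1 u h_1⋯h_{j-1}, has infinite order; in particular θ_n^k ≠ 1 for every k ≥ 1. -/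
namespace Stmt14

/-- Generators of `Z_n(D_{Z_m})`: `some i` is `h_{i+1}` for `i : Fin (n-1)`, `none` is `u`. -/
abbrev Gen (n : ℕ) := Option (Fin (n - 1))

def H {n : ℕ} (i : Fin (n - 1)) : FreeGroup (Gen n) := FreeGroup.of (some i)

def U {n : ℕ} : FreeGroup (Gen n) := FreeGroup.of none

/-- Defining relations of `Z_n(D_{Z_m})`. -/
def zrels (n m : ℕ) : Set (FreeGroup (Gen n)) :=
  {r | r = U ^ m
    ∨ (∃ i j : Fin (n - 1), (i : ℕ) + 1 = (j : ℕ) ∧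
        r = H i * H j * H i * (H j * H i * H j)⁻¹)
    ∨ (∃ i j : Fin (n - 1), (i : ℕ) + 2 ≤ (j : ℕ) ∧
        r = H i * H j * (H j * H i)⁻¹)
    ∨ (∃ i : Fin (n - 1), 1 ≤ (i : ℕ) ∧ r = U * H i * (H i * U)⁻¹)
    ∨ (∃ i : Fin (n - 1), (i : ℕ) = 0 ∧
        r = (H i * U * H i) * U * (U * (H i * U * H i))⁻¹)}

/-- The orbifold braid group `Z_n(D_{Z_m})`. -/
abbrev Z (n m : ℕ) := PresentedGroup (zrels n m)

/-- `h_j` (1-based) as an element of `Z_n(D_{Z_m})`; equal to `1` when out of range. -/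
def hh (n m : ℕ) (j : ℕ) : Z n m :=
  if hj : j - 1 < n - 1 then PresentedGroup.of (some ⟨j - 1, hj⟩) else 1

def uu (n m : ℕ) : Z n m := PresentedGroup.of none

/-- `γ_j = h_{j-1} ⋯ h_1 · u · h_1 ⋯ h_{j-1}`. -/
def γ (n m : ℕ) (j : ℕ) : Z n m :=
  (((List.range (j - 1)).map (fun k => hh n m (k + 1))).reverse).prod * uu n m *
    ((List.range (j - 1)).map (fun k => hh n m (k + 1))).prod

/-- `θ_n = γ_n γ_{n-1} ⋯ γ_1`. -/
def θ (n m : ℕ) : Z n m :=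
  (((List.range n).map (fun k => γ n m (k + 1))).reverse).prod

/-- abelianization-style map: h ↦ 1, u ↦ 0 -/
def fgen (n : ℕ) : Gen n → Multiplicative ℤ :=
  fun g => match g with
  | some _ => Multiplicative.ofAdd 1
  | none => 1

lemma rels_ok (n m : ℕ) : ∀ r ∈ zrels n m, FreeGroup.lift (fgen n) r = 1 := by
  rintro r (rfl | ⟨i, j, -, rfl⟩ | ⟨i, j, -, rfl⟩ | ⟨i, -, rfl⟩ | ⟨i, -, rfl⟩) <;>
    simp [H, U, fgen] <;> group

def φ (n m : ℕ) : Z n m →* Multiplicative ℤ :=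
  PresentedGroup.toGroup (rels_ok n m)

lemma φ_hh (n m j : ℕ) (h : j - 1 < n - 1) : φ n m (hh n m j) = Multiplicative.ofAdd 1 := by
  rw [hh, dif_pos h]
  exact PresentedGroup.toGroup.of (rels_ok n m)

lemma φ_uu (n m : ℕ) : φ n m (uu n m) = 1 :=
  PresentedGroup.toGroup.of (rels_ok n m)

lemma prod_const (n m : ℕ) (N : ℕ) (hN : N ≤ n - 1) :
    φ n m (((List.range N).map (fun k => hh n m (k + 1))).prod)
      = Multiplicative.ofAdd (N : ℤ) := by
  induction N with
  | zero => simp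
  | succ N ih =>
    have h1 : N ≤ n - 1 := Nat.le_of_succ_le hN
    rw [List.range_succ, List.map_append, List.prod_append, map_mul, ih h1]
    simp only [List.map_cons, List.map_nil, List.prod_cons, List.prod_nil, mul_one]
    rw [φ_hh n m (N + 1) (by omega)]
    rw [← ofAdd_add]
    push_cast
    ring_nf

lemma φ_rev (n m : ℕ) (l : List (Z n m)) : φ n m l.reverse.prod = φ n m l.prod := by
  rw [map_list_prod, map_list_prod, List.map_reverse, List.prod_reverse]

lemma φ_γ (n m : ℕ) (j : ℕ) (hj : 1 ≤ j) (hjn : j ≤ n) :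
    φ n m (γ n m j) = Multiplicative.ofAdd (2 * ((j : ℤ) - 1)) := by
  have h : j - 1 ≤ n - 1 := by omega
  rw [γ, map_mul, map_mul, φ_uu, mul_one, φ_rev, prod_const n m _ h, ← ofAdd_add]
  congr 1
  have : ((j - 1 : ℕ) : ℤ) = (j : ℤ) - 1 := by omega
  rw [this]; ring

lemma φ_θ (n m : ℕ) (hn : 2 ≤ n) :
    φ n m (θ n m) = Multiplicative.ofAdd ((n : ℤ) * ((n : ℤ) - 1)) := by
  rw [θ, φ_rev, map_list_prod, List.map_map]
  have : ∀ N ≤ n, ((List.range N).map (φ n m ∘ fun k => γ n m (k + 1))).prod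
      = Multiplicative.ofAdd ((N : ℤ) * ((N : ℤ) - 1)) := by
    intro N hN
    induction N with
    | zero => simp
    | succ N ih =>
      rw [List.range_succ, List.map_append, List.prod_append, ih (by omega)]
      simp only [List.map_cons, List.map_nil, List.prod_cons, List.prod_nil, mul_one,
        Function.comp_apply]
      rw [φ_γ n m (N + 1) (by omega) (by omega), ← ofAdd_add]
      congr 1
      push_cast
      ring
  exact this n le_rfl

theorem stmt_14 (n m : ℕ) (hn : 2 ≤ n) (hm : 2 ≤ m) :
    ¬ IsOfFinOrder (θ n m) ∧ ∀ k : ℕ, 1 ≤ k → (θ n m) ^ k ≠ 1 := by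
  have key : ∀ k : ℕ, 1 ≤ k → (θ n m) ^ k ≠ 1 := by
    intro k hk h
    have := congrArg (φ n m) h
    rw [map_pow, φ_θ n m hn, map_one, ← ofAdd_nsmul] at this
    have h2 := congrArg Multiplicative.toAdd this
    simp only [toAdd_ofAdd, toAdd_one, nsmul_eq_mul] at h2
    have hpos : 0 < (n : ℤ) * ((n : ℤ) - 1) := by
      have : (2 : ℤ) ≤ (n : ℤ) := by exact_mod_cast hn
      nlinarith
    have : 0 < (k : ℤ) * ((n : ℤ) * ((n : ℤ) - 1)) := by
      have : (1 : ℤ) ≤ (k : ℤ) := by exact_mod_cast hk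
      nlinarith
    nlinarith
  refine ⟨fun h => ?_, key⟩
  obtain ⟨k, hk, hθ⟩ := (isOfFinOrder_iff_pow_eq_one).mp h
  exact key k hk hθ

end Stmt14
end

section
/- Let n ≥ 2 and m ≥ 2, and let l be the minimal positive integer such that m divides l·n. Let H be the subgroup of Z_n(D_{Z_m}) generated by u h_1 u^{-1}, h_1, …, h_{n-1}, and let θ_n = γ_n γ_{n-1} ⋯ γ_1, where γ_j = h_{j-1}⋯h_1 u h_1⋯h_{j-1}. Then for every integer k ≥ 0, θ_n^k ∈ H if and only if l divides k. -/
namespace Stmt15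

/-- Generators of `Z_n(D_{Z_m})`: `some i` is `h_{i+1}` for `i : Fin (n-1)`, `none` is `u`. -/
abbrev Gen (n : ℕ) := Option (Fin (n - 1))

def H {n : ℕ} (i : Fin (n - 1)) : FreeGroup (Gen n) := FreeGroup.of (some i)

def U {n : ℕ} : FreeGroup (Gen n) := FreeGroup.of none

/-- Defining relations of `Z_n(D_{Z_m})`. -/
def zrels (n m : ℕ) : Set (FreeGroup (Gen n)) :=
  {r | r = U ^ m
    ∨ (∃ i j : Fin (n - 1), (i : ℕ) + 1 = (j : ℕ) ∧
        r = H i * H j * H i * (H j * H i * H j)⁻¹)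
    ∨ (∃ i j : Fin (n - 1), (i : ℕ) + 2 ≤ (j : ℕ) ∧
        r = H i * H j * (H j * H i)⁻¹)
    ∨ (∃ i : Fin (n - 1), 1 ≤ (i : ℕ) ∧ r = U * H i * (H i * U)⁻¹)
    ∨ (∃ i : Fin (n - 1), (i : ℕ) = 0 ∧
        r = (H i * U * H i) * U * (U * (H i * U * H i))⁻¹)}

/-- The orbifold braid group `Z_n(D_{Z_m})`. -/
abbrev Z (n m : ℕ) := PresentedGroup (zrels n m)

/-- `h_j` (1-based) as an element of `Z_n(D_{Z_m})`; equal to `1` when out of range. -/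
def hh (n m : ℕ) (j : ℕ) : Z n m :=
  if hj : j - 1 < n - 1 then PresentedGroup.of (some ⟨j - 1, hj⟩) else 1

def uu (n m : ℕ) : Z n m := PresentedGroup.of none

/-- `γ_j = h_{j-1} ⋯ h_1 · u · h_1 ⋯ h_{j-1}`. -/
def γ (n m : ℕ) (j : ℕ) : Z n m :=
  (((List.range (j - 1)).map (fun k => hh n m (k + 1))).reverse).prod * uu n m *
    ((List.range (j - 1)).map (fun k => hh n m (k + 1))).prod

/-- `θ_n = γ_n γ_{n-1} ⋯ γ_1`. -/
def θ (n m : ℕ) : Z n m :=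
  (((List.range n).map (fun k => γ n m (k + 1))).reverse).prod

/-- The subgroup generated by `u h_1 u⁻¹, h_1, …, h_{n-1}` (the copy of `Ã(Δ_n^m)`). -/
def Hsub (n m : ℕ) : Subgroup (Z n m) :=
  Subgroup.closure
    (insert (uu n m * hh n m 1 * (uu n m)⁻¹)
      (Set.range fun i : Fin (n - 1) => (PresentedGroup.of (some i) : Z n m)))

section Aux
variable {n m : ℕ}

lemma rel_eq_one {r : FreeGroup (Gen n)} (h : r ∈ zrels n m) :
    PresentedGroup.mk (zrels n m) r = 1 :=
  (QuotientGroup.eq_one_iff r).mpr (Subgroup.subset_normalClosure h)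

lemma u_pow_m : (uu n m) ^ m = 1 := by
  have := rel_eq_one (n := n) (m := m) (r := U ^ m) (Or.inl rfl)
  rw [map_pow] at this
  exact this

lemma u_comm (i : Fin (n - 1)) (hi : 1 ≤ (i : ℕ)) :
    uu n m * PresentedGroup.of (some i) =
      PresentedGroup.of (some i) * uu n m := by
  have := rel_eq_one (n := n) (m := m) (r := U * H i * (H i * U)⁻¹)
    (Or.inr (Or.inr (Or.inr (Or.inl ⟨i, hi, rfl⟩))))
  rw [map_mul, map_inv, map_mul, mul_inv_eq_one] at this
  exact this

lemma rel5 (i : Fin (n - 1)) (hi : (i : ℕ) = 0) :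
    PresentedGroup.of (some i) * uu n m * PresentedGroup.of (some i) * uu n m =
      uu n m * (PresentedGroup.of (some i) * uu n m * PresentedGroup.of (some i)) := by
  have := rel_eq_one (n := n) (m := m)
    (r := (H i * U * H i) * U * (U * (H i * U * H i))⁻¹)
    (Or.inr (Or.inr (Or.inr (Or.inr ⟨i, hi, rfl⟩))))
  rw [map_mul, map_inv, map_mul, map_mul, map_mul, map_mul, mul_inv_eq_one] at this
  exact this

/-- The map `Gen n → Multiplicative (ZMod m)`, `u ↦ 1`, `h_j ↦ 0`. -/
def fgen (n m : ℕ) : Gen n → Multiplicative (ZMod m) :=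
  fun x => Option.elim x (Multiplicative.ofAdd 1) (fun _ => 1)

lemma frels : ∀ r ∈ zrels n m, FreeGroup.lift (fgen n m) r = 1 := by
  rintro r (rfl | ⟨i, j, hij, rfl⟩ | ⟨i, j, hij, rfl⟩ | ⟨i, hi, rfl⟩ | ⟨i, hi, rfl⟩) <;>
    simp only [U, H, map_pow, map_mul, map_inv, FreeGroup.lift_apply_of, fgen, Option.elim]
  · rw [← ofAdd_nsmul, nsmul_eq_mul, mul_one, ZMod.natCast_self, ofAdd_zero]
  · group
  · group
  · group
  · group

/-- The degree homomorphism `Z n m → ℤ/m`. -/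
def φ (n m : ℕ) : Z n m →* Multiplicative (ZMod m) :=
  PresentedGroup.toGroup (frels (n := n) (m := m))

@[simp] lemma φ_u : φ n m (uu n m) = Multiplicative.ofAdd 1 :=
  PresentedGroup.toGroup.of _

@[simp] lemma φ_h (i : Fin (n - 1)) :
    φ n m (PresentedGroup.of (some i)) = 1 :=
  PresentedGroup.toGroup.of _

@[simp] lemma φ_hh (j : ℕ) : φ n m (hh n m j) = 1 := by
  unfold hh
  split
  · exact PresentedGroup.toGroup.of _
  · exact map_one _

end Aux

section Conj
variable {n m : ℕ}

lemma hh_one (hn : 2 ≤ n) :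
    hh n m 1 = PresentedGroup.of (some ⟨0, by omega⟩) := by
  unfold hh
  rw [dif_pos (by omega : (1:ℕ) - 1 < n - 1)]

lemma mem_a (i : Fin (n - 1)) : (PresentedGroup.of (some i) : Z n m) ∈ Hsub n m :=
  Subgroup.subset_closure (Set.mem_insert_of_mem _ ⟨i, rfl⟩)

lemma mem_c1 (hn : 2 ≤ n) :
    uu n m * PresentedGroup.of (some ⟨0, by omega⟩) * (uu n m)⁻¹ ∈ Hsub n m := by
  have h : uu n m * hh n m 1 * (uu n m)⁻¹ ∈ Hsub n m :=
    Subgroup.subset_closure (Set.mem_insert _ _)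
  rwa [hh_one hn] at h

lemma conj_u_mem (hn : 2 ≤ n) {g : Z n m} (hg : g ∈ Hsub n m) :
    uu n m * g * (uu n m)⁻¹ ∈ Hsub n m := by
  set t := uu n m with ht
  refine Subgroup.closure_induction (p := fun x _ => t * x * t⁻¹ ∈ Hsub n m)
    ?_ ?_ ?_ ?_ hg
  · rintro x (rfl | ⟨i, rfl⟩)
    · -- x = u h₁ u⁻¹
      rw [hh_one hn]
      set a := (PresentedGroup.of (some ⟨0, by omega⟩) : Z n m) with ha
      have hR := rel5 (n := n) (m := m) ⟨0, by omega⟩ rfl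
      rw [← ha, ← ht] at hR
      have key : t * (t * a * t⁻¹) * t⁻¹ = (t * a * t⁻¹)⁻¹ * a * (t * a * t⁻¹) := by
        calc t * (t * a * t⁻¹) * t⁻¹
            = t * a⁻¹ * t⁻¹ * ((t * (a * t * a)) * (t⁻¹ * t⁻¹)) := by group
          _ = t * a⁻¹ * t⁻¹ * ((a * t * a * t) * (t⁻¹ * t⁻¹)) := by rw [hR]
          _ = (t * a * t⁻¹)⁻¹ * a * (t * a * t⁻¹) := by group
      rw [key]
      exact mul_mem (mul_mem (inv_mem (mem_c1 hn)) (mem_a _)) (mem_c1 hn)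
    · by_cases hi : (i : ℕ) = 0
      · simp only [show i = ⟨0, by omega⟩ from Fin.ext hi]
        exact mem_c1 hn
      · rw [u_comm i (by omega), mul_assoc, mul_inv_cancel, mul_one]
        exact mem_a i
  · simpa using one_mem (Hsub n m)
  · intro x y _ _ hx hy
    have : t * (x * y) * t⁻¹ = (t * x * t⁻¹) * (t * y * t⁻¹) := by group
    rw [this]; exact mul_mem hx hy
  · intro x _ hx
    have : t * x⁻¹ * t⁻¹ = (t * x * t⁻¹)⁻¹ := by group
    rw [this]; exact inv_mem hx

lemma conj_uinv_mem (hn : 2 ≤ n) {g : Z n m} (hg : g ∈ Hsub n m) :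
    (uu n m)⁻¹ * g * uu n m ∈ Hsub n m := by
  set t := uu n m with ht
  refine Subgroup.closure_induction (p := fun x _ => t⁻¹ * x * t ∈ Hsub n m)
    ?_ ?_ ?_ ?_ hg
  · rintro x (rfl | ⟨i, rfl⟩)
    · rw [hh_one hn]
      set a := (PresentedGroup.of (some ⟨0, by omega⟩) : Z n m) with ha
      have : t⁻¹ * (t * a * t⁻¹) * t = a := by group
      rw [this]; exact mem_a _
    · by_cases hi : (i : ℕ) = 0
      · simp only [show i = ⟨0, by omega⟩ from Fin.ext hi]
        set a := (PresentedGroup.of (some ⟨0, by omega⟩) : Z n m) with ha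
        have hR := rel5 (n := n) (m := m) ⟨0, by omega⟩ rfl
        rw [← ha, ← ht] at hR
        have key : t⁻¹ * a * t = a * (t * a * t⁻¹) * a⁻¹ := by
          calc t⁻¹ * a * t
              = t⁻¹ * (a * t * a * t) * (t⁻¹ * a⁻¹) := by group
            _ = t⁻¹ * (t * (a * t * a)) * (t⁻¹ * a⁻¹) := by rw [hR]
            _ = a * (t * a * t⁻¹) * a⁻¹ := by group
        rw [key]
        exact mul_mem (mul_mem (mem_a _) (mem_c1 hn)) (inv_mem (mem_a _))
      · rw [show t⁻¹ * PresentedGroup.of (some i) * t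
              = t⁻¹ * (PresentedGroup.of (some i) * t) from by group,
            ← u_comm i (by omega)]
        rw [show t⁻¹ * (t * PresentedGroup.of (some i)) = PresentedGroup.of (some i) from by group]
        exact mem_a i
  · simpa using one_mem (Hsub n m)
  · intro x y _ _ hx hy
    have : t⁻¹ * (x * y) * t = (t⁻¹ * x * t) * (t⁻¹ * y * t) := by group
    rw [this]; exact mul_mem hx hy
  · intro x _ hx
    have : t⁻¹ * x⁻¹ * t = (t⁻¹ * x * t)⁻¹ := by group
    rw [this]; exact inv_mem hx

lemma hsub_normal (hn : 2 ≤ n) : (Hsub n m).Normal := by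
  rw [← Subgroup.normalizer_eq_top_iff, eq_top_iff, ← PresentedGroup.closure_range_of (zrels n m),
    Subgroup.closure_le]
  rintro x ⟨y, rfl⟩
  cases y with
  | some i => exact Subgroup.le_normalizer (mem_a i)
  | none =>
    rw [SetLike.mem_coe, show (PresentedGroup.of none : Z n m) = uu n m from rfl,
      Subgroup.mem_normalizer_iff]
    intro h
    constructor
    · exact fun hh => conj_u_mem hn hh
    · intro hh
      have h2 := conj_uinv_mem hn hh
      rwa [show (uu n m)⁻¹ * (uu n m * h * (uu n m)⁻¹) * uu n m = h from by group] at h2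

end Conj

section Main
variable {n m : ℕ}

lemma φ_γ (j : ℕ) : φ n m (γ n m j) = Multiplicative.ofAdd 1 := by
  unfold γ
  rw [map_mul, map_mul, map_list_prod, map_list_prod, φ_u]
  rw [List.prod_eq_one, List.prod_eq_one, one_mul, mul_one]
  · intro x hx
    simp only [List.mem_map] at hx
    obtain ⟨y, hy, rfl⟩ := hx
    obtain ⟨z, -, rfl⟩ := hy
    exact φ_hh _
  · intro x hx
    simp only [List.mem_reverse, List.mem_map, List.mem_map] at hx
    obtain ⟨y, hy, rfl⟩ := hx
    obtain ⟨z, -, rfl⟩ := hy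
    exact φ_hh _

lemma φ_θ : φ n m (θ n m) = Multiplicative.ofAdd (n : ZMod m) := by
  unfold θ
  rw [map_list_prod]
  rw [List.prod_eq_pow_card _ (Multiplicative.ofAdd (1 : ZMod m)) ?_]
  · rw [List.length_map, List.length_reverse, List.length_map, List.length_range,
      ← ofAdd_nsmul, nsmul_eq_mul, mul_one]
  · intro x hx
    simp only [List.mem_map, List.mem_reverse] at hx
    obtain ⟨y, hy, rfl⟩ := hx
    obtain ⟨z, -, rfl⟩ := hy
    exact φ_γ _

lemma Hsub_le_ker : Hsub n m ≤ (φ n m).ker := by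
  rw [Hsub, Subgroup.closure_le]
  rintro x (rfl | ⟨i, rfl⟩)
  · simp only [SetLike.mem_coe, MonoidHom.mem_ker, map_mul, map_inv, φ_u, φ_hh]
    group
  · simp only [SetLike.mem_coe, MonoidHom.mem_ker, φ_h]

lemma mem_Hsub_iff (hn : 2 ≤ n) (hm : 2 ≤ m) (g : Z n m) :
    g ∈ Hsub n m ↔ φ n m g = 1 := by
  haveI : (Hsub n m).Normal := hsub_normal hn
  haveI : NeZero m := ⟨by omega⟩
  constructor
  · exact fun h => Hsub_le_ker h
  · intro hg
    set ψ := QuotientGroup.mk' (Hsub n m) with hψ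
    -- the quotient is generated by the image of u
    have hcyc : ∀ x : Z n m, ψ x ∈ Subgroup.zpowers (ψ (uu n m)) := by
      intro x
      refine PresentedGroup.generated_by (zrels n m)
        ((Subgroup.zpowers (ψ (uu n m))).comap ψ) ?_ x
      intro j
      cases j with
      | none => exact Subgroup.mem_comap.mpr (Subgroup.mem_zpowers _)
      | some i =>
        refine Subgroup.mem_comap.mpr ?_
        have : ψ (PresentedGroup.of (some i)) = 1 :=
          (QuotientGroup.eq_one_iff _).mpr (mem_a i)
        rw [this]
        exact one_mem _
    obtain ⟨s, hs⟩ := hcyc g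
    have hφ' : ∀ x ∈ Hsub n m, φ n m x = 1 := fun x hx => Hsub_le_ker hx
    set φ' := QuotientGroup.lift (Hsub n m) (φ n m) Hsub_le_ker with hφ'def
    have key : φ' (ψ g) = φ n m g := QuotientGroup.lift_mk' _ _ g
    rw [← hs, map_zpow] at key
    have : φ' (ψ (uu n m)) = Multiplicative.ofAdd (1 : ZMod m) := by
      have h1 : φ' (ψ (uu n m)) = φ n m (uu n m) := QuotientGroup.lift_mk' _ _ (uu n m)
      rw [h1, φ_u]
    rw [this, hg, ← ofAdd_zsmul, zsmul_eq_mul, mul_one] at key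
    have hdvd : (m : ℤ) ∣ s := by
      have key2 : ((s : ZMod m)) = 0 := Multiplicative.ofAdd.injective key
      rwa [ZMod.intCast_zmod_eq_zero_iff_dvd] at key2
    obtain ⟨q, rfl⟩ := hdvd
    have : ψ g = 1 := by
      rw [← hs]
      show ψ (uu n m) ^ ((m : ℤ) * q) = 1
      rw [zpow_mul, zpow_natCast, ← map_pow, u_pow_m, map_one, one_zpow]
    exact (QuotientGroup.eq_one_iff g).mp this

lemma arith (l : ℕ) (hl : 0 < l) (hdvd : m ∣ l * n)
    (hmin : ∀ l' : ℕ, 0 < l' → m ∣ l' * n → l ≤ l') (k : ℕ) :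
    m ∣ k * n ↔ l ∣ k := by
  constructor
  · intro h
    rcases Nat.eq_zero_or_pos (k % l) with hr | hr
    · exact Nat.dvd_of_mod_eq_zero hr
    · exfalso
      have hk : k = l * (k / l) + k % l := (Nat.div_add_mod k l).symm
      have h1 : m ∣ (l * (k / l)) * n := by
        have : (l * (k / l)) * n = (l * n) * (k / l) := by ring
        rw [this]; exact Dvd.dvd.mul_right hdvd _
      have h2 : m ∣ (k % l) * n := by
        have : k * n = (l * (k / l)) * n + (k % l) * n := by rw [← Nat.add_mul, ← hk]
        rw [this] at h
        exact (Nat.dvd_add_right h1).mp h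
      exact absurd (hmin _ hr h2) (by have := Nat.mod_lt k hl; omega)
  · rintro ⟨q, rfl⟩
    have : l * q * n = (l * n) * q := by ring
    rw [this]
    exact Dvd.dvd.mul_right hdvd _

end Main

theorem stmt_15 (n m l : ℕ) (hn : 2 ≤ n) (hm : 2 ≤ m)
    (hl : 0 < l) (hdvd : m ∣ l * n)
    (hmin : ∀ l' : ℕ, 0 < l' → m ∣ l' * n → l ≤ l') :
    ∀ k : ℕ, (θ n m) ^ k ∈ Hsub n m ↔ l ∣ k := by
  intro k
  haveI : NeZero m := ⟨by omega⟩
  rw [mem_Hsub_iff hn hm, map_pow, φ_θ, ← ofAdd_nsmul, nsmul_eq_mul,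
    show ((k : ZMod m) * (n : ZMod m)) = ((k * n : ℕ) : ZMod m) by push_cast; ring,
    show (1 : Multiplicative (ZMod m)) = Multiplicative.ofAdd (0 : ZMod m) from rfl,
    Multiplicative.ofAdd.apply_eq_iff_eq, ZMod.natCast_eq_zero_iff]
  exact arith l hl hdvd hmin k

end Stmt15
end

section
/- Let n ≥ 2 and m ≥ 2, and let l be the minimal positive integer such that m divides l·n. Let H be the subgroup of Z_n(D_{Z_m}) generated by u h_1 u^{-1}, h_1, …, h_{n-1}, and let θ_n = γ_n γ_{n-1} ⋯ γ_1, where γ_j = h_{j-1}⋯h_1 u h_1⋯h_{j-1}. Then θ_n^l is a nontrivial element of H that commutes with every element of H; in particular the center of H is nontrivial. -/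
namespace Stmt16

/-- Generators of `Z_n(D_{Z_m})`: `some i` is `h_{i+1}` for `i : Fin (n-1)`, `none` is `u`. -/
abbrev Gen (n : ℕ) := Option (Fin (n - 1))

def H {n : ℕ} (i : Fin (n - 1)) : FreeGroup (Gen n) := FreeGroup.of (some i)

def U {n : ℕ} : FreeGroup (Gen n) := FreeGroup.of none

/-- Defining relations of `Z_n(D_{Z_m})`. -/
def zrels (n m : ℕ) : Set (FreeGroup (Gen n)) :=
  {r | r = U ^ m
    ∨ (∃ i j : Fin (n - 1), (i : ℕ) + 1 = (j : ℕ) ∧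
        r = H i * H j * H i * (H j * H i * H j)⁻¹)
    ∨ (∃ i j : Fin (n - 1), (i : ℕ) + 2 ≤ (j : ℕ) ∧
        r = H i * H j * (H j * H i)⁻¹)
    ∨ (∃ i : Fin (n - 1), 1 ≤ (i : ℕ) ∧ r = U * H i * (H i * U)⁻¹)
    ∨ (∃ i : Fin (n - 1), (i : ℕ) = 0 ∧
        r = (H i * U * H i) * U * (U * (H i * U * H i))⁻¹)}

/-- The orbifold braid group `Z_n(D_{Z_m})`. -/
abbrev Z (n m : ℕ) := PresentedGroup (zrels n m)

/-- `h_j` (1-based) as an element of `Z_n(D_{Z_m})`; equal to `1` when out of range. -/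
def hh (n m : ℕ) (j : ℕ) : Z n m :=
  if hj : j - 1 < n - 1 then PresentedGroup.of (some ⟨j - 1, hj⟩) else 1

def uu (n m : ℕ) : Z n m := PresentedGroup.of none

/-- `γ_j = h_{j-1} ⋯ h_1 · u · h_1 ⋯ h_{j-1}`. -/
def γ (n m : ℕ) (j : ℕ) : Z n m :=
  (((List.range (j - 1)).map (fun k => hh n m (k + 1))).reverse).prod * uu n m *
    ((List.range (j - 1)).map (fun k => hh n m (k + 1))).prod

/-- `θ_n = γ_n γ_{n-1} ⋯ γ_1`. -/
def θ (n m : ℕ) : Z n m :=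
  (((List.range n).map (fun k => γ n m (k + 1))).reverse).prod

/-- The subgroup generated by `u h_1 u⁻¹, h_1, …, h_{n-1}` (the copy of `Ã(Δ_n^m) = B(m,m,n)`). -/
def Hsub (n m : ℕ) : Subgroup (Z n m) :=
  Subgroup.closure
    (insert (uu n m * hh n m 1 * (uu n m)⁻¹)
      (Set.range fun i : Fin (n - 1) => (PresentedGroup.of (some i) : Z n m)))

/-! The element θ_n is central in the whole group `Z_n(D_{Z_m})`. Consecutive `γ_i, γ_{i+1}`
commute: for `i = 1` this is the relation `(h₁ u h₁) u = u (h₁ u h₁)`, and the braid relations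
carry it from `i` to `i + 1`. Since `γ_{i+1} γ_i = h_i γ_i h_i γ_i`, this makes `h_i` commute with
`γ_{i+1} γ_i`, while `h_i` commutes with every other `γ_j`, and `u` commutes with every `γ_j`.

As moreover `γ_j u⁻¹ ∈ H`, we get `θ_n u⁻ⁿ ∈ H`; since `u^{ln} = 1`,
`θ_n^l = (θ_n u⁻ⁿ)^l ∈ H`. Finally `θ_n^l ≠ 1`: counting the letters `h_i` gives a homomorphism
to `ℤ` killing `u`, which sends `γ_j` to `2(j - 1)` and hence `θ_n^l` to `l n (n - 1) ≠ 0`. -/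

section BraidIdentities

variable {G : Type*} [Group G] {a b g : G}

theorem commute_of_braid_of_commute (hab : a * b * a = b * a * b) (hbg : Commute b g) :
    Commute a (b * (a * g * a) * b) :=
  calc a * (b * (a * g * a) * b) = a * b * a * g * (a * b) := by simp only [mul_assoc]
    _ = b * a * (b * g) * a * b := by rw [hab]; simp only [mul_assoc]
    _ = b * a * g * (b * a * b) := by rw [hbg.eq]; simp only [mul_assoc]
    _ = b * (a * g * a) * b * a := by rw [← hab]; simp only [mul_assoc]

theorem commute_conj_of_braid_of_commute (hab : a * b * a = b * a * b) (hbg : Commute b g)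
    (hg : Commute g (a * g * a)) : Commute (a * g * a) (b * (a * g * a) * b) :=
  calc a * g * a * (b * (a * g * a) * b) = a * g * (a * b * a) * g * a * b := by
        simp only [mul_assoc]
    _ = a * g * b * a * (b * g) * a * b := by rw [hab]; simp only [mul_assoc]
    _ = a * g * b * a * g * (b * a * b) := by rw [hbg.eq]; simp only [mul_assoc]
    _ = a * (g * b) * a * g * a * b * a := by rw [← hab]; simp only [mul_assoc]
    _ = a * b * (g * (a * g * a)) * b * a := by rw [← hbg.eq]; simp only [mul_assoc]
    _ = a * b * a * g * a * (g * b) * a := by rw [hg.eq]; simp only [mul_assoc]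
    _ = b * a * (b * g) * a * b * g * a := by rw [← hbg.eq, hab]; simp only [mul_assoc]
    _ = b * a * g * (b * a * b) * g * a := by rw [hbg.eq]; simp only [mul_assoc]
    _ = b * (a * g * a) * b * (a * g * a) := by rw [← hab]; simp only [mul_assoc]

theorem commute_conj_mul_of_commute_conj (h : Commute g (a * g * a)) :
    Commute a (a * g * a * g) :=
  calc a * (a * g * a * g) = a * (g * (a * g * a)) := by rw [h.eq]
    _ = a * g * a * g * a := by simp only [mul_assoc]

end BraidIdentities

section Relations

variable {n m : ℕ}

theorem hh_eq_one {j : ℕ} (h : ¬ j - 1 < n - 1) : hh n m j = 1 := dif_neg h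

theorem of_some_eq_hh (i : Fin (n - 1)) :
    (PresentedGroup.of (some i) : Z n m) = hh n m (i + 1) := by
  rw [hh, dif_pos (by simp)]
  rfl

theorem mk_H (i : Fin (n - 1)) : PresentedGroup.mk (zrels n m) (H i) = hh n m (i + 1) :=
  of_some_eq_hh i

theorem mk_U : PresentedGroup.mk (zrels n m) U = uu n m := rfl

theorem uu_pow_eq_one : uu n m ^ m = 1 := by
  have h := PresentedGroup.one_of_mem (rels := zrels n m) (Or.inl rfl)
  rwa [map_pow, mk_U] at h

theorem hh_braid {j : ℕ} (hj : 1 ≤ j) (hjn : j + 1 < n) :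
    hh n m j * hh n m (j + 1) * hh n m j = hh n m (j + 1) * hh n m j * hh n m (j + 1) := by
  obtain ⟨i, rfl⟩ : ∃ i, j = i + 1 := ⟨j - 1, by omega⟩
  simpa only [map_mul, mk_H] using PresentedGroup.mk_eq_mk_of_mul_inv_mem (rels := zrels n m)
    (Or.inr <| Or.inl ⟨⟨i, by omega⟩, ⟨i + 1, by omega⟩, rfl, rfl⟩)

theorem hh_commute {i j : ℕ} (hi : 1 ≤ i) (hij : i + 2 ≤ j) : Commute (hh n m i) (hh n m j) := by
  by_cases hj : j - 1 < n - 1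
  · obtain ⟨i, rfl⟩ : ∃ k, i = k + 1 := ⟨i - 1, by omega⟩
    obtain ⟨j, rfl⟩ : ∃ k, j = k + 1 := ⟨j - 1, by omega⟩
    have h := PresentedGroup.mk_eq_mk_of_mul_inv_mem (rels := zrels n m)
      (Or.inr <| Or.inr <| Or.inl ⟨⟨i, by omega⟩, ⟨j, by omega⟩, by simp only; omega, rfl⟩)
    simp only [map_mul, mk_H] at h
    exact h
  · rw [hh_eq_one hj]
    exact Commute.one_right _

theorem uu_commute_hh {j : ℕ} (hj : 2 ≤ j) : Commute (uu n m) (hh n m j) := by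
  by_cases hjn : j - 1 < n - 1
  · obtain ⟨j, rfl⟩ : ∃ k, j = k + 1 := ⟨j - 1, by omega⟩
    have h := PresentedGroup.mk_eq_mk_of_mul_inv_mem (rels := zrels n m)
      (Or.inr <| Or.inr <| Or.inr <| Or.inl ⟨⟨j, by omega⟩, by simp only; omega, rfl⟩)
    simp only [map_mul, mk_H, mk_U] at h
    exact h
  · rw [hh_eq_one hjn]
    exact Commute.one_right _

theorem uu_commute_hh_one_conj : Commute (uu n m) (hh n m 1 * uu n m * hh n m 1) := by
  by_cases hn : 1 - 1 < n - 1
  · have h := PresentedGroup.mk_eq_mk_of_mul_inv_mem (rels := zrels n m)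
      (Or.inr <| Or.inr <| Or.inr <| Or.inr ⟨⟨0, hn⟩, rfl, rfl⟩)
    simp only [map_mul, mk_H, mk_U, zero_add] at h
    exact h.symm
  · rw [hh_eq_one hn, one_mul, mul_one]

end Relations

section Gamma

variable {n m : ℕ}

theorem γ_one : γ n m 1 = uu n m := by simp [γ]

theorem γ_succ {j : ℕ} (hj : 1 ≤ j) : γ n m (j + 1) = hh n m j * γ n m j * hh n m j := by
  obtain ⟨i, rfl⟩ : ∃ i, j = i + 1 := ⟨j - 1, by omega⟩
  simp [γ, List.range_succ, mul_assoc]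

theorem uu_commute_γ {j : ℕ} (hj : 1 ≤ j) : Commute (uu n m) (γ n m j) := by
  induction j, hj using Nat.le_induction with
  | base => rw [γ_one]
  | succ j hj ih =>
    rw [γ_succ hj]
    rcases hj.eq_or_lt with rfl | hj2
    · rw [γ_one]
      exact uu_commute_hh_one_conj
    · exact ((uu_commute_hh hj2).mul_right ih).mul_right (uu_commute_hh hj2)

theorem hh_commute_γ_of_lt {i j : ℕ} (hj : 1 ≤ j) (hji : j < i) :
    Commute (hh n m i) (γ n m j) := by
  induction j, hj using Nat.le_induction with
  | base => rw [γ_one]; exact (uu_commute_hh hji).symm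
  | succ j hj ih =>
    rw [γ_succ hj]
    have h := (hh_commute (n := n) (m := m) hj (by omega : j + 2 ≤ i)).symm
    exact (h.mul_right (ih (by omega))).mul_right h

theorem γ_commute_γ_succ {i : ℕ} (hi : 1 ≤ i) (hin : i < n) :
    Commute (γ n m i) (γ n m (i + 1)) := by
  induction i, hi using Nat.le_induction with
  | base => rw [γ_succ le_rfl, γ_one]; exact uu_commute_hh_one_conj
  | succ i hi ih =>
    rw [γ_succ (by omega : 1 ≤ i + 1), γ_succ hi]
    exact commute_conj_of_braid_of_commute (hh_braid hi hin) (hh_commute_γ_of_lt hi (by omega))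
      (γ_succ hi ▸ ih (by omega))

theorem hh_commute_γ_succ_mul_γ {i : ℕ} (hi : 1 ≤ i) (hin : i < n) :
    Commute (hh n m i) (γ n m (i + 1) * γ n m i) := by
  have h := γ_commute_γ_succ (m := m) hi hin
  rw [γ_succ hi] at h ⊢
  exact commute_conj_mul_of_commute_conj h

theorem hh_commute_γ_of_add_two_le {i j : ℕ} (hi : 1 ≤ i) (hin : i + 2 ≤ n) (hij : i + 2 ≤ j) :
    Commute (hh n m i) (γ n m j) := by
  induction j, hij using Nat.le_induction with
  | base =>
    rw [γ_succ (by omega : 1 ≤ i + 1), γ_succ hi]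
    exact commute_of_braid_of_commute (hh_braid hi (by omega)) (hh_commute_γ_of_lt hi (by omega))
  | succ j hj ih =>
    rw [γ_succ (by omega : 1 ≤ j)]
    have h := hh_commute (n := n) (m := m) hi hj
    exact (h.mul_right ih).mul_right h

end Gamma

section Theta

variable {n m : ℕ}

def Θ (n m k : ℕ) : Z n m := (((List.range k).map (fun i => γ n m (i + 1))).reverse).prod

theorem θ_eq_Θ : θ n m = Θ n m n := rfl

theorem Θ_zero : Θ n m 0 = 1 := rfl

theorem Θ_succ (k : ℕ) : Θ n m (k + 1) = γ n m (k + 1) * Θ n m k := by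
  simp [Θ, List.range_succ]

theorem uu_commute_Θ (k : ℕ) : Commute (uu n m) (Θ n m k) := by
  induction k with
  | zero => exact Commute.one_right _
  | succ k ih => rw [Θ_succ]; exact (uu_commute_γ k.succ_pos).mul_right ih

theorem hh_commute_Θ_of_lt {i k : ℕ} (hki : k < i) : Commute (hh n m i) (Θ n m k) := by
  induction k with
  | zero => exact Commute.one_right _
  | succ k ih =>
    rw [Θ_succ]
    exact (hh_commute_γ_of_lt k.succ_pos hki).mul_right (ih (by omega))

theorem hh_commute_Θ {i k : ℕ} (hi : 1 ≤ i) (hik : i < k) (hkn : k ≤ n) :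
    Commute (hh n m i) (Θ n m k) := by
  induction k, hik using Nat.le_induction with
  | base =>
    obtain ⟨p, rfl⟩ : ∃ p, i = p + 1 := ⟨i - 1, by omega⟩
    rw [Θ_succ, Θ_succ, ← mul_assoc]
    exact (hh_commute_γ_succ_mul_γ hi hkn).mul_right (hh_commute_Θ_of_lt (by omega))
  | succ k hk ih =>
    rw [Θ_succ]
    exact (hh_commute_γ_of_add_two_le hi (by omega) (by omega)).mul_right (ih (by omega))

theorem θ_commute (x : Z n m) : Commute (θ n m) x := by
  refine (Subgroup.mem_centralizer_singleton_iff.mp <|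
    PresentedGroup.generated_by (zrels n m) (Subgroup.centralizer {θ n m}) (fun j ↦ ?_) x).symm
  rw [Subgroup.mem_centralizer_singleton_iff]
  rcases j with _ | i
  · rw [θ_eq_Θ]
    exact (uu_commute_Θ n).eq
  · rw [of_some_eq_hh, θ_eq_Θ]
    exact (hh_commute_Θ (by omega) (by omega) le_rfl).eq

end Theta

section Membership

variable {n m : ℕ}

theorem hh_mem_Hsub (j : ℕ) : hh n m j ∈ Hsub n m := by
  unfold hh
  split_ifs
  · exact Subgroup.subset_closure (Set.mem_insert_of_mem _ ⟨_, rfl⟩)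
  · exact one_mem _

theorem uu_mul_hh_mul_inv_mem_Hsub {j : ℕ} (hj : 1 ≤ j) :
    uu n m * hh n m j * (uu n m)⁻¹ ∈ Hsub n m := by
  rcases hj.eq_or_lt with rfl | hj2
  · exact Subgroup.subset_closure (Set.mem_insert _ _)
  · rw [(uu_commute_hh hj2).eq, mul_inv_cancel_right]
    exact hh_mem_Hsub j

theorem γ_mul_inv_uu_mem_Hsub {j : ℕ} (hj : 1 ≤ j) : γ n m j * (uu n m)⁻¹ ∈ Hsub n m := by
  induction j, hj using Nat.le_induction with
  | base => simp [γ_one]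
  | succ j hj ih =>
    have h : γ n m (j + 1) * (uu n m)⁻¹
        = hh n m j * (γ n m j * (uu n m)⁻¹) * (uu n m * hh n m j * (uu n m)⁻¹) := by
      rw [γ_succ hj]
      group
    rw [h]
    exact mul_mem (mul_mem (hh_mem_Hsub j) ih) (uu_mul_hh_mul_inv_mem_Hsub hj)

theorem Θ_mul_inv_uu_pow_mem_Hsub (k : ℕ) : Θ n m k * (uu n m ^ k)⁻¹ ∈ Hsub n m := by
  induction k with
  | zero => simp [Θ_zero]
  | succ k ih =>
    have hc : Commute (uu n m)⁻¹ (Θ n m k * (uu n m ^ k)⁻¹) :=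
      ((uu_commute_Θ k).mul_right ((Commute.refl _).pow_right k).inv_right).inv_left
    have h : Θ n m (k + 1) * (uu n m ^ (k + 1))⁻¹
        = γ n m (k + 1) * (uu n m)⁻¹ * (Θ n m k * (uu n m ^ k)⁻¹) :=
      calc Θ n m (k + 1) * (uu n m ^ (k + 1))⁻¹
          = γ n m (k + 1) * (Θ n m k * (uu n m ^ k)⁻¹ * (uu n m)⁻¹) := by
            rw [Θ_succ, pow_succ', mul_inv_rev]
            simp only [mul_assoc]
        _ = γ n m (k + 1) * (uu n m)⁻¹ * (Θ n m k * (uu n m ^ k)⁻¹) := by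
            rw [← hc.eq, mul_assoc]
    rw [h]
    exact mul_mem (γ_mul_inv_uu_mem_Hsub k.succ_pos) ih

theorem θ_pow_mem_Hsub {l : ℕ} (hdvd : m ∣ l * n) : θ n m ^ l ∈ Hsub n m := by
  have hc : Commute (θ n m * (uu n m ^ n)⁻¹) (uu n m ^ n) :=
    (θ_commute _).mul_left (Commute.refl _).inv_left
  have hu : (uu n m ^ n) ^ l = 1 := by
    obtain ⟨c, hc⟩ := hdvd
    rw [← pow_mul, mul_comm, hc, pow_mul, uu_pow_eq_one, one_pow]
  have h : θ n m ^ l = (θ n m * (uu n m ^ n)⁻¹) ^ l :=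
    calc θ n m ^ l = (θ n m * (uu n m ^ n)⁻¹ * uu n m ^ n) ^ l := by rw [inv_mul_cancel_right]
      _ = (θ n m * (uu n m ^ n)⁻¹) ^ l := by rw [hc.mul_pow, hu, mul_one]
  rw [h, θ_eq_Θ]
  exact pow_mem (Θ_mul_inv_uu_pow_mem_Hsub n) l

end Membership

section Degree

variable {n m : ℕ}

theorem hLetterCount_rels : ∀ r ∈ zrels n m,
    FreeGroup.lift (fun x : Gen n => x.elim 1 fun _ => Multiplicative.ofAdd (1 : ℤ)) r = 1 := by
  rintro r (h | ⟨i, j, -, h⟩ | ⟨i, j, -, h⟩ | ⟨i, -, h⟩ | ⟨i, -, h⟩) <;>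
    subst h <;>
    simp only [H, U, map_mul, map_inv, map_pow, FreeGroup.lift_apply_of, Option.elim_none,
      Option.elim_some] <;>
    group

def hLetterCount (n m : ℕ) : Z n m →* Multiplicative ℤ := PresentedGroup.toGroup hLetterCount_rels

theorem hLetterCount_uu : hLetterCount n m (uu n m) = 1 := PresentedGroup.toGroup.of _

theorem hLetterCount_hh {j : ℕ} (hj : 1 ≤ j) (hjn : j < n) :
    hLetterCount n m (hh n m j) = Multiplicative.ofAdd 1 := by
  rw [hh, dif_pos (by omega)]
  exact PresentedGroup.toGroup.of _

theorem hLetterCount_γ {j : ℕ} (hj : 1 ≤ j) (hjn : j ≤ n) :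
    hLetterCount n m (γ n m j) = Multiplicative.ofAdd (2 * ((j : ℤ) - 1)) := by
  induction j, hj using Nat.le_induction with
  | base => rw [γ_one, hLetterCount_uu]; rfl
  | succ j hj ih =>
    rw [γ_succ hj, map_mul, map_mul, hLetterCount_hh hj (by omega), ih (by omega), ← ofAdd_add,
      ← ofAdd_add]
    congr 1
    push_cast
    ring

theorem hLetterCount_Θ {k : ℕ} (hk : k ≤ n) :
    hLetterCount n m (Θ n m k) = Multiplicative.ofAdd ((k : ℤ) * (k - 1)) := by
  induction k with
  | zero => rfl
  | succ k ih =>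
    rw [Θ_succ, map_mul, hLetterCount_γ k.succ_pos hk, ih (by omega), ← ofAdd_add]
    congr 1
    push_cast
    ring

theorem θ_pow_ne_one (hn : 2 ≤ n) {l : ℕ} (hl : 0 < l) : θ n m ^ l ≠ 1 := by
  intro h
  have h' := congrArg (hLetterCount n m) h
  rw [map_pow, map_one, θ_eq_Θ, hLetterCount_Θ le_rfl, ← ofAdd_nsmul, ofAdd_eq_one,
    nsmul_eq_mul] at h'
  have : (0 : ℤ) < l * (n * (n - 1)) := mul_pos (by omega) (mul_pos (by omega) (by omega))
  omega

end Degree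

theorem stmt_16_general (n m l : ℕ) (hn : 2 ≤ n)
    (hl : 0 < l) (hdvd : m ∣ l * n) :
    (θ n m) ^ l ∈ Hsub n m ∧ (θ n m) ^ l ≠ 1 ∧
      ∀ x ∈ Hsub n m, (θ n m) ^ l * x = x * (θ n m) ^ l :=
  ⟨θ_pow_mem_Hsub hdvd, θ_pow_ne_one hn hl, fun x _ => ((θ_commute x).pow_left l).eq⟩

theorem stmt_16 (n m l : ℕ) (hn : 2 ≤ n) (hm : 2 ≤ m)
    (hl : 0 < l) (hdvd : m ∣ l * n)
    (hmin : ∀ l' : ℕ, 0 < l' → m ∣ l' * n → l ≤ l') :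
    (θ n m) ^ l ∈ Hsub n m ∧ (θ n m) ^ l ≠ 1 ∧
      ∀ x ∈ Hsub n m, (θ n m) ^ l * x = x * (θ n m) ^ l :=
  stmt_16_general n m l hn hl hdvd

end Stmt16
end

section
/- Let G be a group and let h_1, h_2, a ∈ G satisfy the braid relations h_1 h_2 h_1 = h_2 h_1 h_2 and a h_2 a = h_2 a h_2. Then the element a^{-1} h_1 a satisfies the braid relation with h_2, i.e. (a^{-1} h_1 a) h_2 (a^{-1} h_1 a) = h_2 (a^{-1} h_1 a) h_2, if and only if (h_1 a h_2)^2 = (h_2 h_1 a)^2. -/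
theorem stmt_19 {G : Type*} [Group G] (h₁ h₂ a : G)
    (braid₁ : h₁ * h₂ * h₁ = h₂ * h₁ * h₂) (braid₂ : a * h₂ * a = h₂ * a * h₂) :
    ((a⁻¹ * h₁ * a) * h₂ * (a⁻¹ * h₁ * a) = h₂ * (a⁻¹ * h₁ * a) * h₂) ↔
      (h₁ * a * h₂) ^ 2 = (h₂ * h₁ * a) ^ 2 := by
  have f1 : h₂ * h₁ * h₂⁻¹ = h₁⁻¹ * h₂ * h₁ := by
    rw [show h₂ * h₁ * h₂⁻¹ = h₁⁻¹ * (h₁ * h₂ * h₁) * h₂⁻¹ by group, braid₁]; group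
  have f2 : a * h₂ * a⁻¹ = h₂⁻¹ * a * h₂ := by
    rw [show h₂⁻¹ * a * h₂ = h₂⁻¹ * (a * h₂ * a) * a⁻¹ by group, braid₂]; group
  have L1 : (h₂ * h₁ * a) ^ 2 = h₁ * h₂ * a * ((a⁻¹ * h₁ * a) * h₂ * (a⁻¹ * h₁ * a)) := by
    calc (h₂ * h₁ * a) ^ 2 = h₁ * (h₁⁻¹ * h₂ * h₁) * (a * h₂ * h₁ * a) := by rw [sq]; group
      _ = h₁ * (h₂ * h₁ * h₂⁻¹) * (a * h₂ * h₁ * a) := by rw [f1]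
      _ = h₁ * h₂ * h₁ * (h₂⁻¹ * a * h₂) * (h₁ * a) := by group
      _ = h₁ * h₂ * h₁ * (a * h₂ * a⁻¹) * (h₁ * a) := by rw [f2]
      _ = h₁ * h₂ * a * ((a⁻¹ * h₁ * a) * h₂ * (a⁻¹ * h₁ * a)) := by group
  have L2 : (h₁ * a * h₂) ^ 2 = h₁ * h₂ * a * (h₂ * (a⁻¹ * h₁ * a) * h₂) := by
    calc (h₁ * a * h₂) ^ 2 = h₁ * (a * h₂ * a) * (a⁻¹ * h₁ * a * h₂) := by rw [sq]; group
      _ = h₁ * (h₂ * a * h₂) * (a⁻¹ * h₁ * a * h₂) := by rw [braid₂]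
      _ = h₁ * h₂ * a * (h₂ * (a⁻¹ * h₁ * a) * h₂) := by group
  constructor
  · intro h
    rw [L2, L1, h]
  · intro g
    exact mul_left_cancel (a := h₁ * h₂ * a) (by rw [← L1, ← L2, g])
end
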